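/- arXiv:1609.08072 — 12 statements merged into one kernel-verified Lean document; each statement's English description precedes it below -/
import Mathlib

section
/- Let G be a finite group with |G| = n ≥ 2, and let X_G be the simple graph with vertex set G × G in which two distinct vertices u, v are adjacent if and only if u⁻¹v lies in {(s,1) : s ∈ G, s ≠ 1} ∪ {(1,s) : s ∈ G, s ≠ 1} ∪ {(s,s) : s ∈ G, s ≠ 1}. Then X_G is strongly regular with parameters (n², 3n−3, n, 6): it has n² vertices, is (3n−3)-regular, any two adjacent vertices have exactly n common neighbours, and any two distinct non-adjacent vertices have exactly 6 common neighbours. -/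
/-!
`X_G` is the graph of a net: the vertex `(a, b)` lies on three lines `b = const`,
`a = const` and `a b⁻¹ = const`, any two of which coordinatize `G × G`, and two vertices are
adjacent iff they lie on a common line. In a net of order `n` with `m` parallel classes, a vertex
has `m (n - 1)` neighbours. Two distinct vertices share at most one line; a common neighbour off
that line is the crossing point of the class-`i` line through one with the class-`j` line through
the other, for an ordered pair `i ≠ j` of classes not containing their common line. Hence collinear
vertices have `(n - 2) + (m - 1)(m - 2)` common neighbours and non-collinear ones `m (m - 1)`.
For `m = 3` these are the parameters `(n², 3n - 3, n, 6)`.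
-/

open Finset

section Net

variable {ι V α : Type*}

/-- `f i v` is the line of the `i`-th parallel class through the point `v`. -/
def IsNet (f : ι → V → α) : Prop :=
  Pairwise fun i j => Function.Bijective fun v => (f i v, f j v)

def netGraph (f : ι → V → α) : SimpleGraph V where
  Adj u v := u ≠ v ∧ ∃ i, f i u = f i v
  symm := ⟨fun _ _ h => ⟨h.1.symm, h.2.imp fun _ => Eq.symm⟩⟩
  loopless := ⟨fun _ h => h.1 rfl⟩

@[simp]
theorem netGraph_adj {f : ι → V → α} {u v : V} :
    (netGraph f).Adj u v ↔ u ≠ v ∧ ∃ i, f i u = f i v :=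
  Iff.rfl

theorem SimpleGraph.card_commonNeighbors_eq_card_filter {G : SimpleGraph V} [Fintype V]
    [DecidableRel G.Adj] (u v : V) :
    Fintype.card (G.commonNeighbors u v) = #{w | G.Adj u w ∧ G.Adj v w} := by
  rw [← Set.toFinset_card]
  congr 1
  ext w
  simp [SimpleGraph.mem_commonNeighbors]

theorem netGraph_commonNeighbors_on_line {f : ι → V → α} [Fintype V] [DecidableEq V]
    [DecidableEq α] [DecidableRel (netGraph f).Adj] {u v : V} {k : ι} (hk : f k u = f k v) :
    ({w | ((netGraph f).Adj u w ∧ (netGraph f).Adj v w) ∧ f k w = f k u} : Finset V) =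
      ({w | f k w = f k u} : Finset V) \ {u, v} := by
  ext w
  simp only [mem_filter, mem_univ, true_and, netGraph_adj, mem_sdiff, mem_insert, mem_singleton,
    not_or]
  constructor
  · rintro ⟨⟨⟨hu, -⟩, hv, -⟩, hw⟩
    exact ⟨hw, Ne.symm hu, Ne.symm hv⟩
  · rintro ⟨hw, hwu, hwv⟩
    exact ⟨⟨⟨Ne.symm hwu, k, hw.symm⟩, Ne.symm hwv, k, (hw.trans hk).symm⟩, hw⟩

namespace IsNet

variable {f : ι → V → α} (hf : IsNet f) {i j k : ι} {u v w : V}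
include hf

theorem eq_of_coord_eq (hij : i ≠ j) (hi : f i u = f i v) (hj : f j u = f j v) : u = v :=
  (hf hij).1 (Prod.ext hi hj)

theorem coord_ne_of_coord_eq (huv : u ≠ v) (hk : f k u = f k v) (hik : i ≠ k) :
    f i u ≠ f i v :=
  fun hi => huv (hf.eq_of_coord_eq hik hi hk)

noncomputable def point (hij : i ≠ j) (a b : α) : V :=
  (Equiv.ofBijective _ (hf hij)).symm (a, b)

theorem coord_point_left (hij : i ≠ j) (a b : α) : f i (hf.point hij a b) = a :=
  congrArg Prod.fst ((Equiv.ofBijective _ (hf hij)).apply_symm_apply (a, b))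

theorem coord_point_right (hij : i ≠ j) (a b : α) : f j (hf.point hij a b) = b :=
  congrArg Prod.snd ((Equiv.ofBijective _ (hf hij)).apply_symm_apply (a, b))

theorem eq_point (hij : i ≠ j) (hi : f i w = f i u) (hj : f j w = f j v) :
    w = hf.point hij (f i u) (f j v) :=
  hf.eq_of_coord_eq hij (hi.trans (hf.coord_point_left hij _ _).symm)
    (hj.trans (hf.coord_point_right hij _ _).symm)

theorem eq_of_coord_point_eq_left (hij : i ≠ j) (hj : f j u ≠ f j v)
    (hk : f k (hf.point hij (f i u) (f j v)) = f k u) : k = i := by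
  by_contra hki
  have hu : hf.point hij (f i u) (f j v) = u :=
    hf.eq_of_coord_eq hki hk (hf.coord_point_left hij _ _)
  exact hj (hu ▸ hf.coord_point_right hij _ _)

theorem eq_of_coord_point_eq_right (hij : i ≠ j) (hi : f i u ≠ f i v)
    (hk : f k (hf.point hij (f i u) (f j v)) = f k v) : k = j := by
  by_contra hkj
  have hv : hf.point hij (f i u) (f j v) = v :=
    hf.eq_of_coord_eq hkj hk (hf.coord_point_right hij _ _)
  exact hi (hv ▸ hf.coord_point_left hij _ _).symm

theorem card_eq_sq [Fintype V] [Fintype α] [Nontrivial ι] :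
    Fintype.card V = Fintype.card α ^ 2 := by
  obtain ⟨i, j, hij⟩ := exists_pair_ne ι
  rw [Fintype.card_congr (Equiv.ofBijective _ (hf hij)), Fintype.card_prod, sq]

theorem card_line [Fintype V] [Fintype α] [DecidableEq α] [Nontrivial ι] (i : ι) (a : α) :
    #{w | f i w = a} = Fintype.card α := by
  obtain ⟨j, hji⟩ := exists_ne i
  refine card_nbij (f j) (fun _ _ => mem_univ _) (fun w hw w' hw' h => ?_) fun b _ => ?_
  · simp only [coe_filter, mem_univ, true_and, Set.mem_ofPred_eq] at hw hw'
    exact hf.eq_of_coord_eq hji h (hw.trans hw'.symm)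
  · exact ⟨hf.point hji.symm a b, by simp [hf.coord_point_left], hf.coord_point_right _ _ _⟩

theorem degree_netGraph [Fintype V] [Fintype α] [Fintype ι] [Nontrivial ι]
    [DecidableRel (netGraph f).Adj] (u : V) :
    (netGraph f).degree u = Fintype.card ι * (Fintype.card α - 1) := by
  classical
  have hnbrs : (netGraph f).neighborFinset u =
      univ.biUnion fun i => ({w | f i w = f i u} : Finset V).erase u := by
    ext w
    simp [eq_comm]
  have hdisj : ((univ : Finset ι) : Set ι).PairwiseDisjoint
      fun i => ({w | f i w = f i u} : Finset V).erase u := by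
    intro i _ j _ hij
    refine disjoint_left.2 fun w hwi hwj => ?_
    simp only [mem_erase, mem_filter, mem_univ, true_and] at hwi hwj
    exact hwi.1 (hf.eq_of_coord_eq hij hwi.2 hwj.2)
  rw [SimpleGraph.degree, hnbrs, card_biUnion hdisj]
  simp [card_erase_of_mem, hf.card_line]

/-- The common neighbours of `u` and `v` on no line through both are the points
`hf.point _ (f i u) (f j v)` for the ordered pairs `i ≠ j` of classes separating `u` from `v`. -/
theorem card_commonNeighbors_off_common_lines [Fintype V] [Fintype ι] [DecidableEq ι]
    [DecidableEq α] [DecidableRel (netGraph f).Adj] (u v : V) :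
    #{w | (netGraph f).Adj u w ∧ (netGraph f).Adj v w ∧ ∀ k, f k u = f k v → f k w ≠ f k u} =
      #({i | f i u ≠ f i v} : Finset ι).offDiag := by
  symm
  refine card_bij (fun p hp => hf.point (mem_offDiag.1 hp).2.2 (f p.1 u) (f p.2 v))
    (fun ⟨i, j⟩ hp => ?_) (fun ⟨i, j⟩ hp ⟨i', j'⟩ hp' h => ?_) fun w hw => ?_
  · obtain ⟨hi, hj, hij⟩ := mem_offDiag.1 hp
    simp only [mem_filter, mem_univ, true_and] at hi hj ⊢
    have hwi := hf.coord_point_left hij (f i u) (f j v)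
    have hwj := hf.coord_point_right hij (f i u) (f j v)
    have hwu : u ≠ hf.point hij (f i u) (f j v) := fun h => hj (by rw [h, hwj])
    refine ⟨⟨hwu, i, hwi.symm⟩, ⟨fun h => hi (by rw [h, hwi]), j, hwj.symm⟩, fun k hk hkw => ?_⟩
    obtain rfl := hf.eq_of_coord_point_eq_left hij hj hkw
    exact hi hk
  · obtain ⟨hi, hj, hij⟩ := mem_offDiag.1 hp
    have hij' := (mem_offDiag.1 hp').2.2
    simp only [mem_filter, mem_univ, true_and] at hi hj
    have hi' := hf.coord_point_left hij' (f i' u) (f j' v)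
    have hj' := hf.coord_point_right hij' (f i' u) (f j' v)
    rw [← h] at hi' hj'
    exact Prod.ext (hf.eq_of_coord_point_eq_left hij hj hi').symm
      (hf.eq_of_coord_point_eq_right hij hi hj').symm
  · simp only [mem_filter, mem_univ, true_and, netGraph_adj] at hw
    obtain ⟨⟨hwu, i, hi⟩, ⟨hwv, j, hj⟩, hoff⟩ := hw
    have hi' : f i u ≠ f i v := fun h => hoff i h hi.symm
    have hj' : f j u ≠ f j v := fun h => hoff j h (hj.symm.trans h.symm)
    have hij : i ≠ j := by rintro rfl; exact hi' (hi.trans hj.symm)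
    exact ⟨(i, j), mem_offDiag.2 ⟨by simpa, by simpa, hij⟩,
      (hf.eq_point hij hi.symm hj.symm).symm⟩

theorem card_commonNeighbors_of_not_adj [Fintype V] [Fintype ι]
    [DecidableRel (netGraph f).Adj] (huv : u ≠ v) (h : ¬(netGraph f).Adj u v) :
    Fintype.card ((netGraph f).commonNeighbors u v) = Fintype.card ι * (Fintype.card ι - 1) := by
  classical
  have hne : ∀ i, f i u ≠ f i v := fun i hi => h ⟨huv, i, hi⟩
  calc Fintype.card ((netGraph f).commonNeighbors u v)
      = #{w | (netGraph f).Adj u w ∧ (netGraph f).Adj v w ∧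
          ∀ k, f k u = f k v → f k w ≠ f k u} := by
        rw [SimpleGraph.card_commonNeighbors_eq_card_filter]
        simp [hne]
    _ = #({i | f i u ≠ f i v} : Finset ι).offDiag := hf.card_commonNeighbors_off_common_lines u v
    _ = Fintype.card ι * (Fintype.card ι - 1) := by simp [hne, Nat.mul_sub_one]

theorem card_commonNeighbors_of_adj [Fintype V] [Fintype α] [Fintype ι] [Nontrivial ι]
    [DecidableRel (netGraph f).Adj] (h : (netGraph f).Adj u v) :
    Fintype.card ((netGraph f).commonNeighbors u v) =
      (Fintype.card ι - 1) * (Fintype.card ι - 2) + Fintype.card α - 2 := by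
  classical
  obtain ⟨huv, k, hk⟩ := h
  have hne : ∀ i, f i u = f i v ↔ i = k :=
    fun i => ⟨fun hi => by_contra fun hik => hf.coord_ne_of_coord_eq huv hk hik hi, (· ▸ hk)⟩
  have hpair : {u, v} ⊆ ({w | f k w = f k u} : Finset V) := by simp [insert_subset_iff, hk]
  have hα : 2 ≤ Fintype.card α := by
    rw [← hf.card_line k (f k u), ← card_pair huv]
    exact card_le_card hpair
  have hon : #{w | ((netGraph f).Adj u w ∧ (netGraph f).Adj v w) ∧ f k w = f k u} =
      Fintype.card α - 2 := by
    rw [netGraph_commonNeighbors_on_line hk, card_sdiff_of_subset hpair, hf.card_line,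
      card_pair huv]
  have hoff : #{w | ((netGraph f).Adj u w ∧ (netGraph f).Adj v w) ∧ ¬f k w = f k u} =
      (Fintype.card ι - 1) * (Fintype.card ι - 2) := by
    have hk' : ({i | f i u ≠ f i v} : Finset ι) = univ.erase k := by ext; simp [hne]
    rw [show Fintype.card ι - 2 = Fintype.card ι - 1 - 1 by omega, Nat.mul_sub_one, ← card_univ,
      ← card_erase_of_mem (mem_univ k), ← offDiag_card, ← hk',
      ← hf.card_commonNeighbors_off_common_lines]
    congr 1
    ext w
    simp only [mem_filter, mem_univ, true_and, hne, forall_eq, and_assoc, ne_eq]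
  rw [SimpleGraph.card_commonNeighbors_eq_card_filter, ← card_filter_add_card_filter_not
    (fun w => f k w = f k u), filter_filter, filter_filter, hon, hoff]
  omega

theorem isSRGWith_netGraph [Fintype V] [Fintype α] [Fintype ι] [Nontrivial ι]
    [DecidableRel (netGraph f).Adj] :
    (netGraph f).IsSRGWith (Fintype.card α ^ 2) (Fintype.card ι * (Fintype.card α - 1))
      ((Fintype.card ι - 1) * (Fintype.card ι - 2) + Fintype.card α - 2)
      (Fintype.card ι * (Fintype.card ι - 1)) where
  card := hf.card_eq_sq
  regular := hf.degree_netGraph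
  of_adj _ _ := hf.card_commonNeighbors_of_adj
  of_not_adj _ _ := hf.card_commonNeighbors_of_not_adj

end IsNet

end Net

section CayleyTable

variable (G : Type*) [Group G]

def cayleyNet : Fin 3 → G × G → G :=
  ![Prod.snd, Prod.fst, fun u => u.1 * u.2⁻¹]

theorem isNet_cayleyNet : IsNet (cayleyNet G) := by
  intro i j hij
  refine ⟨fun ⟨a, b⟩ ⟨c, d⟩ h => ?_, fun ⟨x, y⟩ => ?_⟩
  · fin_cases i <;> fin_cases j <;> simp only [cayleyNet, Prod.ext_iff] at h ⊢ <;>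
      obtain ⟨h₁, h₂⟩ := h <;> subst_vars <;> simp_all
  · fin_cases i <;> fin_cases j <;> simp [cayleyNet] at hij ⊢
    exacts [⟨y * x, by group⟩, ⟨y⁻¹ * x, by group⟩, ⟨x * y, by group⟩, ⟨x⁻¹ * y, by group⟩]

variable {G}

theorem exists_ne_one_eq_axis_or_diagonal_iff {d : G × G} (hd : d ≠ 1) :
    ((∃ s : G, s ≠ 1 ∧ d = (s, 1)) ∨ (∃ s : G, s ≠ 1 ∧ d = (1, s)) ∨
      (∃ s : G, s ≠ 1 ∧ d = (s, s))) ↔ d.2 = 1 ∨ d.1 = 1 ∨ d.1 = d.2 := by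
  constructor
  · rintro (⟨s, -, rfl⟩ | ⟨s, -, rfl⟩ | ⟨s, -, rfl⟩)
    exacts [Or.inl rfl, Or.inr (Or.inl rfl), Or.inr (Or.inr rfl)]
  · rintro (h | h | h)
    · exact Or.inl ⟨d.1, fun h1 => hd (Prod.ext h1 h), Prod.ext rfl h⟩
    · exact Or.inr (Or.inl ⟨d.2, fun h2 => hd (Prod.ext h h2), Prod.ext h rfl⟩)
    · exact Or.inr (Or.inr ⟨d.1, fun h1 => hd (Prod.ext h1 (h.symm.trans h1)),
        Prod.ext rfl h.symm⟩)

theorem inv_mul_on_axis_or_diagonal_iff (u v : G × G) :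
    (u⁻¹ * v).2 = 1 ∨ (u⁻¹ * v).1 = 1 ∨ (u⁻¹ * v).1 = (u⁻¹ * v).2 ↔
      ∃ i, cayleyNet G i u = cayleyNet G i v := by
  have hdiag : u.1⁻¹ * v.1 = u.2⁻¹ * v.2 ↔ u.1 * u.2⁻¹ = v.1 * v.2⁻¹ := by
    rw [inv_mul_eq_iff_eq_mul, ← mul_assoc, eq_comm, ← mul_inv_eq_iff_eq_mul, inv_inv]
  simp only [Fin.exists_fin_succ, Fin.exists_fin_zero, cayleyNet, Prod.fst_mul, Prod.snd_mul,
    Prod.fst_inv, Prod.snd_inv, inv_mul_eq_one, hdiag, Matrix.cons_val_zero,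
    Matrix.cons_val_succ, or_false]

theorem netGraph_cayleyNet_adj {u v : G × G} :
    (netGraph (cayleyNet G)).Adj u v ↔ u ≠ v ∧
      ((∃ s : G, s ≠ 1 ∧ u⁻¹ * v = (s, 1)) ∨ (∃ s : G, s ≠ 1 ∧ u⁻¹ * v = (1, s)) ∨
        (∃ s : G, s ≠ 1 ∧ u⁻¹ * v = (s, s))) := by
  rw [netGraph_adj]
  refine and_congr_right fun huv => ?_
  rw [exists_ne_one_eq_axis_or_diagonal_iff fun h => huv (inv_mul_eq_one.1 h),
    inv_mul_on_axis_or_diagonal_iff]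

end CayleyTable

theorem stmt_2_general {G : Type*} [Group G] [Fintype G] (n : ℕ)
    (hn : Fintype.card G = n)
    (X : SimpleGraph (G × G)) [DecidableRel X.Adj]
    (hadj : ∀ u v : G × G, X.Adj u v ↔ u ≠ v ∧
      ((∃ s : G, s ≠ 1 ∧ u⁻¹ * v = (s, 1)) ∨ (∃ s : G, s ≠ 1 ∧ u⁻¹ * v = (1, s)) ∨
        (∃ s : G, s ≠ 1 ∧ u⁻¹ * v = (s, s)))) :
    X.IsSRGWith (n ^ 2) (3 * n - 3) n 6 := by
  obtain rfl : X = netGraph (cayleyNet G) := by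
    ext u v
    rw [hadj, netGraph_cayleyNet_adj]
  subst hn
  simpa [Nat.mul_sub_one] using (isNet_cayleyNet G).isSRGWith_netGraph

/-- For a finite group `G` with `|G| = n ≥ 2`, the Cayley graph `X_G` of `G × G` with respect to
`{(s,1)} ∪ {(1,s)} ∪ {(s,s)}` (`s ≠ 1`) is strongly regular with parameters
`(n², 3n-3, n, 6)`. -/
theorem stmt_2 {G : Type*} [Group G] [Fintype G] [DecidableEq G] (n : ℕ)
    (hn : Fintype.card G = n) (hn2 : 2 ≤ n)
    (X : SimpleGraph (G × G)) [DecidableRel X.Adj]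
    (hadj : ∀ u v : G × G, X.Adj u v ↔ u ≠ v ∧
      ((∃ s : G, s ≠ 1 ∧ u⁻¹ * v = (s, 1)) ∨ (∃ s : G, s ≠ 1 ∧ u⁻¹ * v = (1, s)) ∨
        (∃ s : G, s ≠ 1 ∧ u⁻¹ * v = (s, s)))) :
    X.IsSRGWith (n ^ 2) (3 * n - 3) n 6 :=
  stmt_2_general n hn X hadj
end

section
/- Let F be a finite field with q elements where q ≡ 1 (mod 4), and for a ∈ F set S(a) = Σ_{x ∈ F} σ(x³ + a·x) ∈ ℤ. Then: (i) S(a) is an even integer for every a ∈ F; (ii) |S(a·z²)| = |S(a)| for all a ∈ F* and z ∈ F*, so |S(a)| depends only on whether a is a nonzero square or a nonsquare; and (iii) if a ∈ F* is a square and b ∈ F* is a nonsquare, then (S(a)/2)² + (S(b)/2)² = q. -/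
/-!
With `χ` the quadratic character, `S a = ∑ x, χ x * χ (x² + a)`. Modulo 2 the terms at `x` and
`-x` cancel, so `S a` is even, and the substitution `x ↦ z x` gives `S (a z²) = χ z * S a`.
Expanding `S a ^ 2` and summing over `a`, the inner sums `∑ a, χ ((x² + a) (y² + a))` are
`q - 1` or `-1` (the latter is a Jacobi sum), whence `∑ a, S a ^ 2 = 2 q (q - 1)`. As `z` runs
over `F`, the values `a z²` and `b z²` together hit every element of `F` exactly twice, so
`(q - 1) (S a ^ 2 + S b ^ 2) = 2 ∑ u, S u ^ 2 = 4 q (q - 1)`.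
-/

open Finset

theorem Fintype.even_sum_of_involutive {α : Type*} [Fintype α] {i : α → α}
    (hi : Function.Involutive i) {f : α → ℤ} (hf : ∀ x, Even (f x + f (i x)))
    (hfix : ∀ x, i x = x → Even (f x)) : Even (∑ x, f x) := by
  rw [← ZMod.intCast_eq_zero_iff_even, Int.cast_sum]
  refine sum_ninvolution i (fun x => ?_) (fun x hx hix => hx ?_) (fun _ => mem_univ _) hi
  · rw [← Int.cast_add, ZMod.intCast_eq_zero_iff_even]
    exact hf x
  · exact ZMod.intCast_eq_zero_iff_even.mpr (hfix x hix)

section QuadraticChar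

variable {F : Type*} [Field F] [Fintype F] [DecidableEq F]

theorem sum_quadraticChar_sq : ∑ a : F, quadraticChar F a ^ 2 = Fintype.card F - 1 := by
  have h := MulChar.sum_one_eq_card_units (R := F) (R' := ℤ)
  simp_rw [← (quadraticChar_isQuadratic F).sq_eq_one, MulChar.pow_apply' _ two_ne_zero] at h
  rw [h, Fintype.card_units, Nat.cast_sub Fintype.card_pos, Nat.cast_one]

theorem sum_quadraticChar_add_mul_add (hF : ringChar F ≠ 2) (s t : F) :
    ∑ a : F, quadraticChar F ((s + a) * (t + a)) =
      if s = t then (Fintype.card F : ℤ) - 1 else -1 := by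
  split_ifs with hst
  · subst hst
    simp_rw [← sq, map_pow]
    rw [← sum_quadraticChar_sq]
    exact Fintype.sum_equiv (Equiv.addLeft s) _ _ fun a => rfl
  · have hc : s - t ≠ 0 := sub_ne_zero.mpr hst
    have hJ := jacobiSum_nontrivial_inv (quadraticChar_ne_one hF)
    rw [(quadraticChar_isQuadratic F).inv, jacobiSum] at hJ
    -- substitute `a = (s - t) x - s`, so that `s + a = (s - t) x` and `t + a = -(s - t) (1 - x)`
    let e : F ≃ F := (Equiv.mulLeft₀ (s - t) hc).trans (Equiv.subRight s)
    calc ∑ a : F, quadraticChar F ((s + a) * (t + a))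
        = ∑ x : F, quadraticChar F ((s - t) ^ 2 * (-1 * (x * (1 - x)))) :=
          (e.sum_comp _).symm.trans <| sum_congr rfl fun x _ => by
            simp only [e, Equiv.trans_apply, Equiv.mulLeft₀_apply, Equiv.subRight_apply]
            ring_nf
      _ = quadraticChar F (-1) * ∑ x : F, quadraticChar F x * quadraticChar F (1 - x) := by
          simp_rw [map_mul, quadraticChar_sq_one' hc, one_mul, mul_sum]
      _ = -1 := by
          rw [hJ, mul_neg, ← sq, quadraticChar_sq_one (neg_ne_zero.mpr one_ne_zero)]

theorem sum_quadraticChar_of_sq_eq (hF : ringChar F ≠ 2) (h1 : quadraticChar F (-1) = 1)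
    (x : F) : ∑ y with x ^ 2 = y ^ 2, quadraticChar F y = 2 * quadraticChar F x := by
  have hroots : ({y | x ^ 2 = y ^ 2} : Finset F) = {x, -x} := by
    ext y
    simp only [mem_filter, mem_univ, true_and, mem_insert, mem_singleton, sq_eq_sq_iff_eq_or_eq_neg]
    grind
  rw [hroots]
  rcases eq_or_ne x 0 with rfl | hx
  · simp
  · have hneg : x ≠ -x := fun h => hx ((Ring.eq_self_iff_eq_zero_of_char_ne_two hF).mp h.symm)
    rw [sum_pair hneg, ← neg_one_mul, map_mul, h1]
    ring

theorem sum_quadraticChar_mul_ite_sq_eq (hF : ringChar F ≠ 2) (h1 : quadraticChar F (-1) = 1)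
    (x : F) (c : ℤ) :
    ∑ y : F, quadraticChar F y * (if x ^ 2 = y ^ 2 then c - 1 else -1) =
      2 * c * quadraticChar F x := by
  have hsplit : ∀ y : F, quadraticChar F y * (if x ^ 2 = y ^ 2 then c - 1 else -1) =
      c * (if x ^ 2 = y ^ 2 then quadraticChar F y else 0) - quadraticChar F y := by
    intro y
    split_ifs <;> ring
  rw [sum_congr rfl fun y _ => hsplit y, sum_sub_distrib, ← mul_sum, ← sum_filter,
    sum_quadraticChar_of_sq_eq hF h1, quadraticChar_sum_zero hF]
  ring

theorem sum_comp_sq (hF : ringChar F ≠ 2) (f : F → ℤ) :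
    ∑ z : F, f (z ^ 2) = ∑ u : F, (1 + quadraticChar F u) * f u := by
  rw [← sum_fiberwise' univ (· ^ 2) f]
  refine sum_congr rfl fun u _ => ?_
  have hcard := quadraticChar_card_sqrts hF u
  rw [Set.toFinset_ofPred] at hcard
  rw [sum_const, nsmul_eq_mul, hcard, add_comm]

theorem sum_comp_mul_sq (hF : ringChar F ≠ 2) {c : F} (hc : c ≠ 0) (f : F → ℤ) :
    ∑ z : F, f (c * z ^ 2) = ∑ u : F, (1 + quadraticChar F c * quadraticChar F u) * f u := by
  rw [sum_comp_sq hF (fun u => f (c * u))]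
  refine Fintype.sum_equiv (Equiv.mulLeft₀ c hc) _ _ fun u => ?_
  rw [Equiv.mulLeft₀_apply, map_mul, ← mul_assoc, ← sq, quadraticChar_sq_one hc, one_mul]

end QuadraticChar

section Jacobsthal

variable {F : Type*} [Field F] [Fintype F] [DecidableEq F]

def jacobsthalSum (a : F) : ℤ := ∑ x : F, quadraticChar F (x ^ 3 + a * x)

theorem jacobsthalSum_eq_sum_mul (a : F) :
    jacobsthalSum a = ∑ x : F, quadraticChar F x * quadraticChar F (x ^ 2 + a) := by
  refine sum_congr rfl fun x _ => ?_
  rw [← map_mul]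
  ring_nf

theorem jacobsthalSum_zero (hF : ringChar F ≠ 2) : jacobsthalSum (0 : F) = 0 := by
  rw [jacobsthalSum_eq_sum_mul, ← quadraticChar_sum_zero hF]
  refine sum_congr rfl fun x _ => ?_
  rcases eq_or_ne x 0 with rfl | hx
  · simp
  · rw [add_zero, quadraticChar_sq_one' hx, mul_one]

theorem jacobsthalSum_mul_sq (hF : ringChar F ≠ 2) (a z : F) :
    jacobsthalSum (a * z ^ 2) = quadraticChar F z * jacobsthalSum a := by
  rcases eq_or_ne z 0 with rfl | hz
  · simp [jacobsthalSum_zero hF]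
  rw [jacobsthalSum, jacobsthalSum, mul_sum]
  refine (Fintype.sum_equiv (Equiv.mulLeft₀ z hz) _ _ fun x => ?_).symm
  rw [Equiv.mulLeft₀_apply,
    show (z * x) ^ 3 + a * z ^ 2 * (z * x) = z ^ 2 * (z * (x ^ 3 + a * x)) by ring,
    map_mul, quadraticChar_sq_one' hz, one_mul, map_mul]

theorem jacobsthalSum_even (hF : ringChar F ≠ 2) (a : F) : Even (jacobsthalSum a) := by
  refine Fintype.even_sum_of_involutive neg_neg (fun x => ?_) (fun x hx => ?_)
  · have hodd : x ^ 3 + a * x = -1 * ((-x) ^ 3 + a * -x) := by ring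
    rw [hodd, map_mul]
    rcases quadraticChar_dichotomy (neg_ne_zero.mpr (one_ne_zero (α := F))) with h | h <;>
      simp [h, ← two_mul]
  · rw [(Ring.eq_self_iff_eq_zero_of_char_ne_two hF).mp hx]
    simp

theorem sum_jacobsthalSum_sq (hF : ringChar F ≠ 2) (h1 : quadraticChar F (-1) = 1) :
    ∑ a : F, jacobsthalSum a ^ 2 =
      2 * Fintype.card F * ((Fintype.card F : ℤ) - 1) := by
  calc ∑ a : F, jacobsthalSum a ^ 2
      = ∑ x : F, quadraticChar F x * ∑ y : F, quadraticChar F y *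
          ∑ a : F, quadraticChar F ((x ^ 2 + a) * (y ^ 2 + a)) := by
        simp_rw [jacobsthalSum_eq_sum_mul, sq, sum_mul_sum, mul_sum, map_mul]
        rw [sum_comm]
        refine sum_congr rfl fun x _ => ?_
        rw [sum_comm]
        exact sum_congr rfl fun y _ => sum_congr rfl fun a _ => by ring
    _ = ∑ x : F, quadraticChar F x * (2 * (Fintype.card F : ℤ) * quadraticChar F x) := by
        simp_rw [sum_quadraticChar_add_mul_add hF, sum_quadraticChar_mul_ite_sq_eq hF h1]
    _ = 2 * (Fintype.card F : ℤ) * ((Fintype.card F : ℤ) - 1) := by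
        simp_rw [← sum_quadraticChar_sq, mul_sum]
        exact sum_congr rfl fun x _ => by ring

theorem jacobsthalSum_sq_add_sq (hF : ringChar F ≠ 2) (h1 : quadraticChar F (-1) = 1) {a b : F}
    (ha : quadraticChar F a = 1) (hb : quadraticChar F b = -1) :
    jacobsthalSum a ^ 2 + jacobsthalSum b ^ 2 = 4 * Fintype.card F := by
  have ha0 : a ≠ 0 := by rintro rfl; simp at ha
  have hb0 : b ≠ 0 := by rintro rfl; simp at hb
  have hscale : ∀ c : F, ∑ z : F, jacobsthalSum (c * z ^ 2) ^ 2 =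
      (Fintype.card F - 1) * jacobsthalSum c ^ 2 := by
    intro c
    simp_rw [jacobsthalSum_mul_sq hF, mul_pow, ← sum_mul, sum_quadraticChar_sq]
  have hcover : (Fintype.card F - 1) * (jacobsthalSum a ^ 2 + jacobsthalSum b ^ 2) =
      2 * ∑ u : F, jacobsthalSum u ^ 2 := by
    rw [mul_add, ← hscale, ← hscale, sum_comp_mul_sq hF ha0 (jacobsthalSum · ^ 2),
      sum_comp_mul_sq hF hb0 (jacobsthalSum · ^ 2),
      ← sum_add_distrib, mul_sum, ha, hb]
    exact sum_congr rfl fun u _ => by ring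
  have hq : (Fintype.card F : ℤ) - 1 ≠ 0 :=
    sub_ne_zero.mpr (by exact_mod_cast Fintype.one_lt_card.ne')
  rw [sum_jacobsthalSum_sq hF h1] at hcover
  exact mul_left_cancel₀ hq (by linear_combination hcover)

end Jacobsthal

/-- **Jacobsthal's theorem.** Let `F` be a finite field with `q ≡ 1 (mod 4)` elements and let
`σ` be the quadratic character of `F` (with values in `ℤ`). Set `S a = ∑ x, σ (x³ + a x)`.
Then (i) `S a` is even for every `a`; (ii) `|S (a z²)| = |S a|` for nonzero `a, z`, so `|S a|`
only depends on whether `a` is a square; (iii) if `a` is a nonzero square and `b` a nonsquare,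
then `(S a / 2)² + (S b / 2)² = q`. -/
theorem stmt_3 {F : Type*} [Field F] [Fintype F] (q : ℕ)
    (hq : Fintype.card F = q) (hmod : q % 4 = 1)
    (σ : F → ℤ) (hσ0 : σ 0 = 0)
    (hσ1 : ∀ x : F, x ≠ 0 → IsSquare x → σ x = 1)
    (hσ2 : ∀ x : F, ¬ IsSquare x → σ x = -1) :
    (∀ a : F, Even (∑ x : F, σ (x ^ 3 + a * x))) ∧
    (∀ a z : F, a ≠ 0 → z ≠ 0 →
      |∑ x : F, σ (x ^ 3 + a * z ^ 2 * x)| = |∑ x : F, σ (x ^ 3 + a * x)|) ∧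
    (∀ a b : F, a ≠ 0 → b ≠ 0 → IsSquare a → ¬ IsSquare b →
      ((∑ x : F, σ (x ^ 3 + a * x)) / 2) ^ 2 + ((∑ x : F, σ (x ^ 3 + b * x)) / 2) ^ 2
        = (q : ℤ)) := by
  classical
  subst hq
  have hF : ringChar F ≠ 2 := fun h => by
    have := FiniteField.even_card_of_char_two h
    omega
  have h1 : quadraticChar F (-1) = 1 := by
    rw [quadraticChar_neg_one hF, ZMod.χ₄_nat_one_mod_four hmod]
  obtain rfl : σ = quadraticChar F := funext fun y => by
    rcases eq_or_ne y 0 with rfl | hy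
    · rw [hσ0, quadraticChar_zero]
    by_cases hsq : IsSquare y
    · rw [hσ1 y hy hsq, (quadraticChar_one_iff_isSquare hy).mpr hsq]
    · rw [hσ2 y hsq, quadraticChar_neg_one_iff_not_isSquare.mpr hsq]
  refine ⟨jacobsthalSum_even hF, fun a z _ hz => ?_, fun a b ha _ hsa hsb => ?_⟩
  · change |jacobsthalSum (a * z ^ 2)| = |jacobsthalSum a|
    rw [jacobsthalSum_mul_sq hF, abs_mul]
    rcases quadraticChar_dichotomy hz with h | h <;> simp [h]
  · change (jacobsthalSum a / 2) ^ 2 + (jacobsthalSum b / 2) ^ 2 = _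
    have hsum := jacobsthalSum_sq_add_sq hF h1 ((quadraticChar_one_iff_isSquare ha).mpr hsa)
      (quadraticChar_neg_one_iff_not_isSquare.mpr hsb)
    obtain ⟨m, hm⟩ := jacobsthalSum_even hF a
    obtain ⟨n, hn⟩ := jacobsthalSum_even hF b
    rw [hm, hn] at hsum ⊢
    rw [show (m + m) / 2 = m by omega, show (n + n) / 2 = n by omega]
    linarith
end

section
/- For a prime power q ≡ 1 (mod 4), the Paley graph P(q) is strongly regular with parameters (q, (q−1)/2, (q−5)/4, (q−1)/4): it has q vertices, is (q−1)/2-regular, any two adjacent vertices have exactly (q−5)/4 common neighbours, and any two distinct non-adjacent vertices have exactly (q−1)/4 common neighbours. -/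
/-!
Write `χ` for the quadratic character of `F`. For `u ≠ 0` the indicator of "`u` is a square" is
`(1 + χ u) / 2`, so the number of common neighbours of `x` and `y`, after the translation
`z ↦ x - z`, becomes a sum of `(1 + χ t) (1 + χ (t - d)) / 4` over `t ∉ {0, d}`, where
`d = x - y`. The only non-trivial term is `∑ t, χ t χ (t - d)`, which rescaling by `d` turns
into a Jacobi sum `J(χ, χ) = -χ(-1)`, giving `-1`. Since `χ(-1) = 1` for `q ≡ 1 (mod 4)`, the
count only depends on `χ d`, i.e. on whether `x` and `y` are adjacent.
-/

open Finset

section QuadraticChar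

variable {F : Type*} [Field F] [Fintype F] [DecidableEq F]

theorem quadraticChar_sum_sub (hF : ringChar F ≠ 2) (d : F) :
    ∑ t : F, quadraticChar F (t - d) = 0 := by
  rw [Fintype.sum_equiv (Equiv.subRight d) (fun t => quadraticChar F (t - d)) _ fun _ => rfl,
    quadraticChar_sum_zero hF]

theorem quadraticChar_sum_mul_sub (hF : ringChar F ≠ 2) {d : F} (hd : d ≠ 0) :
    ∑ t : F, quadraticChar F t * quadraticChar F (t - d) = -1 := by
  set χ := quadraticChar F
  have hJ : jacobiSum χ χ = -χ (-1) := by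
    simpa only [quadraticChar_isQuadratic F |>.inv] using
      jacobiSum_nontrivial_inv (quadraticChar_ne_one hF)
  calc ∑ t : F, χ t * χ (t - d)
      = ∑ s : F, χ (d * s) * χ (d * s - d) :=
        (Fintype.sum_equiv (Equiv.mulLeft₀ d hd) _ _ fun _ => rfl).symm
    _ = ∑ s : F, χ d ^ 2 * χ (-1) * (χ s * χ (1 - s)) := by
        refine sum_congr rfl fun s _ => ?_
        rw [show d * s - d = d * (-1) * (1 - s) by ring]
        simp only [map_mul]
        ring
    _ = -χ (-1) ^ 2 := by
        rw [← mul_sum, ← jacobiSum, hJ, quadraticChar_sq_one hd]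
        ring
    _ = -1 := by rw [quadraticChar_sq_one (neg_ne_zero.2 one_ne_zero)]

theorem two_mul_ite_isSquare (u : F) :
    2 * (if u ≠ 0 ∧ IsSquare u then 1 else 0 : ℤ) =
      1 + quadraticChar F u - if u = 0 then 1 else 0 := by
  rw [quadraticChar_apply, quadraticCharFun]
  by_cases hu : u = 0 <;> by_cases hs : IsSquare u <;> simp [hu, hs]

theorem two_mul_card_nonzero_squares (hF : ringChar F ≠ 2) :
    2 * (#{u : F | u ≠ 0 ∧ IsSquare u} : ℤ) = Fintype.card F - 1 := by
  rw [natCast_card_filter, mul_sum]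
  simp only [two_mul_ite_isSquare, sum_sub_distrib, sum_add_distrib, sum_ite_eq', mem_univ,
    if_true, quadraticChar_sum_zero hF, sum_const, card_univ, nsmul_eq_mul, mul_one]
  ring

theorem four_mul_card_nonzero_square_pairs (hF : ringChar F ≠ 2) {d : F} (hd : d ≠ 0) :
    4 * (#{t : F | (t ≠ 0 ∧ IsSquare t) ∧ (t - d ≠ 0 ∧ IsSquare (t - d))} : ℤ) =
      Fintype.card F - 3 - quadraticChar F d - quadraticChar F (-d) := by
  have pointwise (t : F) :
      4 * (if (t ≠ 0 ∧ IsSquare t) ∧ (t - d ≠ 0 ∧ IsSquare (t - d)) then 1 else 0 : ℤ) =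
        1 + quadraticChar F t + quadraticChar F (t - d)
          + quadraticChar F t * quadraticChar F (t - d)
          - (if t = 0 then 1 + quadraticChar F (-d) else 0)
          - (if t = d then 1 + quadraticChar F d else 0) := by
    by_cases h0 : t = 0
    · subst h0; simp [hd, hd.symm]
    by_cases h1 : t = d
    · subst h1; simp [h0]
    have h1' : t - d ≠ 0 := sub_ne_zero.2 h1
    simp only [quadraticChar_apply, quadraticCharFun, h0, h1', h1, ne_eq, not_false_eq_true,
      true_and, if_false, sub_zero]
    by_cases hs : IsSquare t <;> by_cases hs' : IsSquare (t - d) <;> simp [hs, hs']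
  rw [natCast_card_filter, mul_sum]
  simp only [pointwise, sum_sub_distrib, sum_add_distrib, sum_ite_eq', mem_univ, if_true,
    quadraticChar_sum_zero hF, quadraticChar_sum_sub hF, quadraticChar_sum_mul_sub hF hd,
    sum_const, card_univ, nsmul_eq_mul, mul_one]
  ring

end QuadraticChar

theorem Finset.card_filter_sub_left {G : Type*} [AddGroup G] [Fintype G] (x : G)
    (p : G → Prop) [DecidablePred p] : #{z : G | p (x - z)} = #{t : G | p t} := by
  simp only [← Fintype.card_subtype]
  exact Fintype.card_congr <| (Equiv.subLeft x).subtypeEquiv fun _ => Iff.rfl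

section PaleyGraph

variable {F : Type*} [Field F] [Fintype F] [DecidableEq F] {X : SimpleGraph F}
  [DecidableRel X.Adj]

theorem degree_eq_card_nonzero_squares (hadj : ∀ x y : F, X.Adj x y ↔ x ≠ y ∧ IsSquare (x - y))
    (v : F) : X.degree v = #{u : F | u ≠ 0 ∧ IsSquare u} := by
  rw [SimpleGraph.degree, SimpleGraph.neighborFinset_eq_filter,
    ← card_filter_sub_left v fun u => u ≠ 0 ∧ IsSquare u]
  simp only [hadj, ne_eq, sub_eq_zero]

theorem four_mul_card_commonNeighbors
    (hadj : ∀ x y : F, X.Adj x y ↔ x ≠ y ∧ IsSquare (x - y))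
    (hF : ringChar F ≠ 2) (hneg : quadraticChar F (-1) = 1) {x y : F} (hxy : x ≠ y) :
    4 * (Fintype.card (X.commonNeighbors x y) : ℤ) =
      Fintype.card F - 3 - 2 * quadraticChar F (x - y) := by
  have hcard : Fintype.card (X.commonNeighbors x y) =
      #{t : F | (t ≠ 0 ∧ IsSquare t) ∧ (t - (x - y) ≠ 0 ∧ IsSquare (t - (x - y)))} := by
    rw [← card_filter_sub_left x, ← Set.toFinset_card]
    congr 1
    ext z
    simp only [Set.mem_toFinset, SimpleGraph.mem_commonNeighbors, hadj, mem_filter, mem_univ,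
      true_and, sub_sub_sub_cancel_left, ne_eq, sub_eq_zero]
  rw [hcard, four_mul_card_nonzero_square_pairs hF (sub_ne_zero.2 hxy), neg_eq_neg_one_mul,
    map_mul, hneg]
  ring

end PaleyGraph

/-- **Paley graphs are strongly regular.** For a prime power `q ≡ 1 (mod 4)`, the Paley graph
`P(q)` (vertices: the field with `q` elements, edges: pairs whose difference is a nonzero
square) is strongly regular with parameters `(q, (q-1)/2, (q-5)/4, (q-1)/4)`. -/
theorem stmt_4 {F : Type*} [Field F] [Fintype F] [DecidableEq F] (q : ℕ)
    (hq : Fintype.card F = q) (hmod : q % 4 = 1)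
    (X : SimpleGraph F) [DecidableRel X.Adj]
    (hadj : ∀ x y : F, X.Adj x y ↔ x ≠ y ∧ IsSquare (x - y)) :
    X.IsSRGWith q ((q - 1) / 2) ((q - 5) / 4) ((q - 1) / 4) := by
  have hF : ringChar F ≠ 2 := fun h => by
    have := FiniteField.even_card_of_char_two h
    omega
  have hneg : quadraticChar F (-1) = 1 := by
    rw [quadraticChar_neg_one hF, hq, ZMod.χ₄_nat_one_mod_four hmod]
  refine ⟨hq, fun v => ?_, fun x y hxy => ?_, fun x y hne hxy => ?_⟩
  · have := two_mul_card_nonzero_squares hF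
    rw [degree_eq_card_nonzero_squares hadj]
    omega
  · obtain ⟨hne, hsq⟩ := (hadj x y).1 hxy
    have := four_mul_card_commonNeighbors hadj hF hneg hne
    rw [(quadraticChar_one_iff_isSquare (sub_ne_zero.2 hne)).2 hsq] at this
    omega
  · have hnsq : ¬IsSquare (x - y) := fun h => hxy ((hadj x y).2 ⟨hne, h⟩)
    have := four_mul_card_commonNeighbors hadj hF hneg hne
    rw [quadraticChar_neg_one_iff_not_isSquare.2 hnsq] at this
    omega
end

section
/- Let q be an odd prime power. The Paley graph P(q²) has chromatic number equal to q and independence number equal to q. -/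
/-!
Let `q` be odd and `|F| = q²`. The subfield `K = {x | x ^ q = x}` has `q` elements, all of
them squares in `F`: for `x ≠ 0`, `x ^ ((q² - 1) / 2) = (x ^ (q - 1)) ^ ((q + 1) / 2) = 1`.
Hence `K` is a clique, and for a nonsquare `c` the additive subgroup `c • K` is independent;
its `q` cosets properly colour the graph, while the clique `K` needs `q` colours. In a Cayley
graph a clique `A` and an independent set `B` satisfy `|A| |B| ≤ |F|`, because `(a, b) ↦ b - a`
is injective on `A × B`; with `|A| = q` this bounds every independent set by `q`.
-/

open Finset

namespace SimpleGraph

theorem IsClique.natCard_le_chromaticNumber {V : Type*} {G : SimpleGraph V} {s : Set V}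
    (h : G.IsClique s) : (Nat.card s : ℕ∞) ≤ G.chromaticNumber :=
  le_chromaticNumber_of_pairwise_adj le_rfl (Subtype.val : s → V)
    fun a b hab => h a.2 b.2 (Subtype.val_injective.ne hab)

variable {G : Type*} [AddCommGroup G] {X : SimpleGraph G} {S : G → Prop}

theorem natCard_mul_natCard_le_of_isClique_of_isIndepSet [Finite G]
    (hadj : ∀ x y, X.Adj x y ↔ x ≠ y ∧ S (x - y)) {A B : Set G} (hA : X.IsClique A)
    (hB : X.IsIndepSet B) : Nat.card A * Nat.card B ≤ Nat.card G := by
  rw [← Nat.card_prod]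
  refine Nat.card_le_card_of_injective (fun ab => (ab.2 : G) - ab.1) ?_
  rintro ⟨⟨a₁, ha₁⟩, ⟨b₁, hb₁⟩⟩ ⟨⟨a₂, ha₂⟩, ⟨b₂, hb₂⟩⟩ h
  obtain rfl | hb := eq_or_ne b₁ b₂
  · obtain rfl : a₁ = a₂ := sub_right_inj.1 h
    rfl
  · have hdiff : b₁ - b₂ = a₁ - a₂ := sub_eq_sub_iff_sub_eq_sub.1 h
    have ha : a₁ ≠ a₂ := fun ha => hb (sub_eq_zero.1 (by rw [hdiff, ha, sub_self]))
    have hSa : S (a₁ - a₂) := ((hadj _ _).1 (hA ha₁ ha₂ ha)).2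
    exact (hB hb₁ hb₂ hb ((hadj _ _).2 ⟨hb, hdiff ▸ hSa⟩)).elim

theorem colorable_index_of_isIndepSet (hadj : ∀ x y, X.Adj x y ↔ x ≠ y ∧ S (x - y))
    (H : AddSubgroup G) [H.FiniteIndex] (hH : X.IsIndepSet (H : Set G)) :
    X.Colorable H.index := by
  have : Fintype (G ⧸ H) := Fintype.ofFinite _
  rw [H.index_eq_card, Nat.card_eq_fintype_card]
  refine (Coloring.mk (G := X) (fun x => (x : G ⧸ H)) fun {x y} hxy hxy' => ?_).colorable
  obtain ⟨hne, hS⟩ := (hadj x y).1 hxy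
  refine hH (QuotientAddGroup.eq_iff_sub_mem.1 hxy') H.zero_mem (sub_ne_zero.2 hne)
    ((hadj _ _).2 ⟨sub_ne_zero.2 hne, ?_⟩)
  rwa [sub_zero]

end SimpleGraph

namespace FiniteField

variable {F : Type*} [Field F] [Fintype F]

theorem card_filter_pow_eq_self [DecidableEq F] {d : ℕ} (hd : 1 < d)
    (hdvd : d - 1 ∣ Fintype.card F - 1) : #{x : F | x ^ d = x} = d := by
  obtain ⟨g, hg⟩ := IsCyclic.exists_generator (α := Fˣ)
  have hg : IsPrimitiveRoot (g : F) (Fintype.card F - 1) := by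
    rw [IsPrimitiveRoot.coe_units_iff, ← Fintype.card_units, ← Nat.card_eq_fintype_card,
      ← orderOf_eq_card_of_forall_mem_zpowers hg]
    exact IsPrimitiveRoot.orderOf g
  have hcard : 0 < Fintype.card F - 1 := Nat.sub_pos_of_lt Fintype.one_lt_card
  have hζ := hg.pow_of_dvd (Nat.div_pos (Nat.le_of_dvd hcard hdvd) (by omega)).ne'
    (Nat.div_dvd_of_dvd hdvd)
  rw [Nat.div_div_self hdvd hcard.ne'] at hζ
  have hroots : ({x : F | x ^ d = x} : Finset F) =
      insert 0 (Polynomial.nthRootsFinset (d - 1) (1 : F)) := by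
    ext x
    rw [mem_filter_univ, mem_insert, Polynomial.mem_nthRootsFinset (by omega), or_comm,
      ← mul_left_eq_self₀, ← pow_succ, Nat.sub_add_cancel hd.le]
  rw [hroots, card_insert_of_notMem, hζ.card_nthRootsFinset, Nat.sub_add_cancel hd.le]
  exact fun h => Polynomial.ne_zero_of_mem_nthRootsFinset one_ne_zero h rfl

theorem exists_subfield_natCard_eq {p n k : ℕ} [Fact p.Prime] [CharP F p]
    (hcard : Fintype.card F = p ^ n) (hk : k ∣ n) (hk0 : k ≠ 0) :
    ∃ K : Subfield F, Nat.card K = p ^ k ∧ ∀ x ∈ K, x ^ p ^ k = x := by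
  classical
  refine ⟨(iterateFrobenius F p k).eqLocusField (RingHom.id F), ?_, fun x hx => hx⟩
  calc Nat.card ((iterateFrobenius F p k).eqLocusField (RingHom.id F))
      = Nat.card {x : F // x ^ p ^ k = x} :=
        Nat.card_congr (Equiv.subtypeEquivRight fun x => Iff.rfl)
    _ = #{x : F | x ^ p ^ k = x} := by rw [Nat.card_eq_fintype_card, Fintype.card_subtype]
    _ = p ^ k := card_filter_pow_eq_self (Nat.one_lt_pow hk0 (Fact.out : p.Prime).one_lt)
        (hcard ▸ Nat.pow_sub_one_dvd_pow_sub_one p hk)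

theorem ringChar_ne_two_of_odd_card (h : Odd (Fintype.card F)) : ringChar F ≠ 2 := by
  rw [Ne, even_card_iff_char_two, ← Nat.even_iff, Nat.not_even_iff_odd]
  exact h

theorem isSquare_of_pow_eq_self {q : ℕ} (hcard : Fintype.card F = q ^ 2) (hq : Odd q) {x : F}
    (hx : x ^ q = x) : IsSquare x := by
  obtain rfl | hx0 := eq_or_ne x 0
  · exact IsSquare.zero
  rw [isSquare_iff (ringChar_ne_two_of_odd_card (hcard ▸ hq.pow)) hx0, hcard]
  obtain ⟨t, rfl⟩ := hq
  have hxt : x ^ (2 * t) = 1 := by rwa [pow_succ, mul_eq_right₀ hx0] at hx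
  have hhalf : (2 * t + 1) ^ 2 / 2 = 2 * t * (t + 1) := by
    rw [show (2 * t + 1) ^ 2 = 2 * (2 * t * (t + 1)) + 1 by ring, Nat.mul_add_div two_pos]
    norm_num
  rw [hhalf, pow_mul, hxt, one_pow]

theorem exists_addSubgroup_natCard_eq_forall_isSquare {p k : ℕ} (hp : p.Prime) (hpodd : Odd p)
    (hk : k ≠ 0) (hcard : Fintype.card F = (p ^ k) ^ 2) :
    ∃ K : AddSubgroup F, Nat.card K = p ^ k ∧ ∀ x ∈ K, IsSquare x := by
  have : Fact p.Prime := ⟨hp⟩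
  have hcard' : Fintype.card F = p ^ (k * 2) := by rw [hcard, pow_mul]
  have : CharP F p := charP_of_card_eq_prime_pow hcard'
  obtain ⟨K, hKcard, hKpow⟩ := exists_subfield_natCard_eq hcard' (dvd_mul_right k 2) hk
  exact ⟨K.toAddSubgroup, hKcard,
    fun x hx => isSquare_of_pow_eq_self hcard hpodd.pow (hKpow x hx)⟩

end FiniteField

namespace PaleyGraph

open SimpleGraph

variable {F : Type*} [Field F] {X : SimpleGraph F} {K : AddSubgroup F}

theorem natCard_map_mulLeft {c : F} (hc : c ≠ 0) :
    Nat.card (K.map (AddMonoidHom.mulLeft c)) = Nat.card K :=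
  AddSubgroup.card_map_of_injective (mul_right_injective₀ hc)

theorem isClique_of_forall_isSquare (hadj : ∀ x y : F, X.Adj x y ↔ x ≠ y ∧ IsSquare (x - y))
    (hK : ∀ x ∈ K, IsSquare x) : X.IsClique (K : Set F) :=
  fun _ ha _ hb hab => (hadj _ _).2 ⟨hab, hK _ (K.sub_mem ha hb)⟩

theorem isIndepSet_map_mulLeft (hadj : ∀ x y : F, X.Adj x y ↔ x ≠ y ∧ IsSquare (x - y))
    (hK : ∀ x ∈ K, IsSquare x) {c : F} (hc : ¬IsSquare c) :
    X.IsIndepSet (K.map (AddMonoidHom.mulLeft c) : Set F) := by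
  rintro _ ⟨a, ha, rfl⟩ _ ⟨b, hb, rfl⟩ hne hab
  have hsq : IsSquare (c * (a - b)) := by simpa [mul_sub] using ((hadj _ _).1 hab).2
  have hab : a - b ≠ 0 := sub_ne_zero.2 fun h => hne (h ▸ rfl)
  exact hc (by simpa [hab] using hsq.div (hK _ (K.sub_mem ha hb)))

variable [Fintype F] {q : ℕ}

theorem natCard_le_of_isIndepSet (hadj : ∀ x y : F, X.Adj x y ↔ x ≠ y ∧ IsSquare (x - y))
    (hcard : Fintype.card F = q ^ 2) (hK : ∀ x ∈ K, IsSquare x) (hKcard : Nat.card K = q)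
    {s : Set F} (hs : X.IsIndepSet s) : Nat.card s ≤ q := by
  have := natCard_mul_natCard_le_of_isClique_of_isIndepSet hadj
    (isClique_of_forall_isSquare hadj hK) hs
  rw [SetLike.coe_sort_coe, hKcard, Nat.card_eq_fintype_card (α := F), hcard, sq] at this
  exact Nat.le_of_mul_le_mul_left this (hKcard ▸ Nat.card_pos)

theorem chromaticNumber_eq (hadj : ∀ x y : F, X.Adj x y ↔ x ≠ y ∧ IsSquare (x - y))
    (hcard : Fintype.card F = q ^ 2) (hK : ∀ x ∈ K, IsSquare x) (hKcard : Nat.card K = q)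
    {c : F} (hc : ¬IsSquare c) : X.chromaticNumber = q := by
  have hc0 : c ≠ 0 := by rintro rfl; exact hc IsSquare.zero
  set I := K.map (AddMonoidHom.mulLeft c)
  have hindex : I.index = q := by
    have := I.card_mul_index
    rw [natCard_map_mulLeft hc0, hKcard, Nat.card_eq_fintype_card, hcard, sq] at this
    exact Nat.eq_of_mul_eq_mul_left (hKcard ▸ Nat.card_pos) this
  have hcol := colorable_index_of_isIndepSet hadj I (isIndepSet_map_mulLeft hadj hK hc)
  exact le_antisymm (hindex ▸ hcol.chromaticNumber_le)
    (hKcard ▸ (isClique_of_forall_isSquare hadj hK).natCard_le_chromaticNumber)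

end PaleyGraph

open FiniteField PaleyGraph in
/-- For an odd prime power `q`, the Paley graph `P(q²)` has chromatic number `q` and
independence number `q`. -/
theorem stmt_5 {F : Type*} [Field F] [Fintype F] (q : ℕ)
    (hq : ∃ p k : ℕ, p.Prime ∧ Odd p ∧ k ≠ 0 ∧ q = p ^ k)
    (hcard : Fintype.card F = q ^ 2)
    (X : SimpleGraph F)
    (hadj : ∀ x y : F, X.Adj x y ↔ x ≠ y ∧ IsSquare (x - y)) :
    X.chromaticNumber = (q : ℕ∞) ∧
    (∃ s : Finset F, (∀ x ∈ s, ∀ y ∈ s, x ≠ y → ¬ X.Adj x y) ∧ s.card = q) ∧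
    (∀ s : Finset F, (∀ x ∈ s, ∀ y ∈ s, x ≠ y → ¬ X.Adj x y) → s.card ≤ q) := by
  classical
  obtain ⟨p, k, hp, hpodd, hk, rfl⟩ := hq
  obtain ⟨K, hKcard, hK⟩ := exists_addSubgroup_natCard_eq_forall_isSquare hp hpodd hk hcard
  obtain ⟨c, hc⟩ := exists_nonsquare (ringChar_ne_two_of_odd_card (hcard ▸ hpodd.pow.pow))
  have hc0 : c ≠ 0 := by rintro rfl; exact hc IsSquare.zero
  have hI := isIndepSet_map_mulLeft hadj hK hc
  refine ⟨chromaticNumber_eq hadj hcard hK hKcard hc,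
    ⟨(K.map (AddMonoidHom.mulLeft c) : Set F).toFinset,
      fun x hx y hy => hI (Set.mem_toFinset.1 hx) (Set.mem_toFinset.1 hy), ?_⟩,
    fun s hs => ?_⟩
  · rw [Set.toFinset_card, ← Nat.card_eq_fintype_card, SetLike.coe_sort_coe,
      natCard_map_mulLeft hc0, hKcard]
  · simpa [Nat.card_eq_finsetCard] using natCard_le_of_isIndepSet hadj hcard hK hKcard hs
end

section
/- Let F be a finite field of odd characteristic with q elements, q > 9, and let f ∈ F[X] be a polynomial of degree 3. Then there exists x ∈ F such that f(x) ≠ 0 and f(x) is not a square in F. -/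
/-! If every value of `f` is a square, then `a ^ ((q + 1) / 2) = a` on all values, so
`X ^ q - X` divides `f ^ ((q + 1) / 2) - f`, with a cofactor `A` of degree `(q + 5) / 2`.
Differentiating at a point where `f` does not vanish, where `f ^ ((q - 1) / 2) = 1` and
`(q + 1) / 2 = 1 / 2` in `F`, gives `A = f' / 2` at the at least `q - 3` such points. For `q > 9`
both sides have degree less than `q - 3`, so `A = f' / 2`, which has degree at most `2`. -/

open Polynomial

namespace Polynomial

theorem eq_of_eval_eq_of_eval_ne_zero {R : Type*} [CommRing R] [IsDomain R] [Fintype R]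
    {f p r : R[X]} (hf : f ≠ 0) (hdeg : f.natDegree + (p - r).natDegree < Fintype.card R)
    (h : ∀ x, f.eval x ≠ 0 → p.eval x = r.eval x) : p = r := by
  have hzero : f * (p - r) = 0 := by
    refine eq_zero_of_forall_eval_zero_of_natDegree_lt_card _ (fun x => ?_) ?_
    · by_cases hx : f.eval x = 0 <;> simp [hx, h x]
    · rw [Cardinal.mk_fintype, Nat.cast_lt]
      exact natDegree_mul_le.trans_lt hdeg
  exact sub_eq_zero.mp ((mul_eq_zero.mp hzero).resolve_left hf)

theorem natDegree_pow_succ_sub_self {R : Type*} [CommRing R] [NoZeroDivisors R] {f : R[X]}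
    {n : ℕ} (hf : 0 < f.natDegree) (hn : n ≠ 0) :
    (f ^ (n + 1) - f).natDegree = f.natDegree * (n + 1) := by
  have hpow : (f ^ (n + 1)).natDegree = f.natDegree * (n + 1) := by
    rw [natDegree_pow, mul_comm]
  rw [natDegree_sub_eq_left_of_natDegree_lt (by rw [hpow]; nlinarith [Nat.pos_of_ne_zero hn]),
    hpow]

end Polynomial

namespace FiniteField

variable {K : Type*} [Field K] [Fintype K]

theorem X_pow_card_sub_X_dvd_of_forall_eval_eq_zero {p : K[X]} (hp : ∀ x, p.eval x = 0) :
    X ^ Fintype.card K - X ∣ p := by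
  have hmonic : (X ^ Fintype.card K - X : K[X]).Monic :=
    monic_X_pow_sub (by rw [degree_X]; exact_mod_cast Fintype.one_lt_card)
  have hdeg := X_pow_card_sub_X_natDegree_eq K (Fintype.one_lt_card (α := K))
  rw [← modByMonic_eq_zero_iff_dvd hmonic]
  refine eq_zero_of_forall_eval_zero_of_natDegree_lt_card _ (fun x => ?_) ?_
  · have h := congrArg (eval x) (modByMonic_add_div p (X ^ Fintype.card K - X))
    simpa [pow_card, hp x] using h
  · rw [Cardinal.mk_fintype, Nat.cast_lt]
    refine (natDegree_modByMonic_lt p hmonic fun h => ?_).trans_eq hdeg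
    rw [h, natDegree_one] at hdeg
    exact Fintype.card_ne_zero hdeg.symm

theorem eval_derivative_X_pow_card_sub_X_mul (A : K[X]) (x : K) :
    (derivative ((X ^ Fintype.card K - X) * A)).eval x = -A.eval x := by
  simp [derivative_mul, derivative_X_pow, pow_card]

theorem natCast_card_div_two (hK : ringChar K ≠ 2) :
    ((Fintype.card K / 2 : ℕ) : K) = -2⁻¹ := by
  have hodd := odd_card_of_char_ne_two hK
  have h : ((2 * (Fintype.card K / 2) + 1 : ℕ) : K) = 0 := by
    rw [show 2 * (Fintype.card K / 2) + 1 = Fintype.card K by omega, Nat.cast_card_eq_zero]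
  push_cast at h
  have h2 : (2 : K) ≠ 0 := Ring.two_ne_zero hK
  field_simp
  linear_combination h

theorem pow_card_div_two_succ_of_isSquare (hK : ringChar K ≠ 2) {a : K} (ha : IsSquare a) :
    a ^ (Fintype.card K / 2 + 1) = a := by
  rcases eq_or_ne a 0 with rfl | ha0
  · simp
  · rw [pow_succ, (isSquare_iff hK ha0).mp ha, one_mul]

theorem eval_eq_half_derivative_of_isSquare (hK : ringChar K ≠ 2) {f A : K[X]}
    (hA : f ^ (Fintype.card K / 2 + 1) - f = (X ^ Fintype.card K - X) * A)
    {x : K} (hx : f.eval x ≠ 0) (hsq : IsSquare (f.eval x)) :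
    A.eval x = 2⁻¹ * (derivative f).eval x := by
  have hfx : f.eval x ^ (Fintype.card K / 2) = 1 := (isSquare_iff hK hx).mp hsq
  have h := congrArg (fun g => (derivative g).eval x) hA
  simp only [eval_derivative_X_pow_card_sub_X_mul, derivative_sub, derivative_pow,
    Nat.add_sub_cancel, eval_sub, eval_mul, eval_pow, eval_C, hfx, Nat.cast_add, Nat.cast_one,
    natCast_card_div_two hK] at h
  linear_combination h

end FiniteField

open FiniteField in
/-- Let `F` be a finite field of odd characteristic with `q > 9` elements, and let `f` be a
cubic polynomial over `F`. Then some nonzero value of `f` is a nonsquare. -/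
theorem stmt_7 {F : Type*} [Field F] [Fintype F] (q : ℕ)
    (hq : Fintype.card F = q) (hchar : ringChar F ≠ 2) (hq9 : 9 < q)
    (f : Polynomial F) (hdeg : f.natDegree = 3) :
    ∃ x : F, f.eval x ≠ 0 ∧ ¬ IsSquare (f.eval x) := by
  by_contra! hcon
  have hsq : ∀ x, IsSquare (f.eval x) := fun x =>
    (eq_or_ne (f.eval x) 0).elim (fun h => h ▸ .zero) (hcon x)
  obtain ⟨A, hA⟩ := X_pow_card_sub_X_dvd_of_forall_eval_eq_zero
    (p := f ^ (Fintype.card F / 2 + 1) - f)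
    fun x => by simp [pow_card_div_two_succ_of_isSquare hchar (hsq x)]
  have hodd := odd_card_of_char_ne_two hchar
  have hf0 : f ≠ 0 := by rintro rfl; simp at hdeg
  have hAdeg := natDegree_pow_succ_sub_self (f := f) (n := Fintype.card F / 2)
    (by omega) (by omega)
  rw [hdeg, hA] at hAdeg
  have hA0 : A ≠ 0 := by rintro rfl; simp at hAdeg
  rw [natDegree_mul (X_pow_card_sub_X_ne_zero F Fintype.one_lt_card) hA0,
    X_pow_card_sub_X_natDegree_eq F Fintype.one_lt_card] at hAdeg
  have hderiv : (C 2⁻¹ * derivative f).natDegree ≤ 2 :=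
    (natDegree_C_mul_le _ _).trans <| (natDegree_derivative_le f).trans (by omega)
  have hAeq : A = C 2⁻¹ * derivative f := by
    refine eq_of_eval_eq_of_eval_ne_zero hf0 ?_ fun x hx => ?_
    · have := natDegree_sub_le A (C 2⁻¹ * derivative f)
      omega
    · simpa using eval_eq_half_derivative_of_isSquare hchar hA hx (hsq x)
  rw [hAeq] at hAdeg
  omega
end

section
/- Let F ⊆ K be finite fields with |F| = q and [K : F] = n, let Tr : K → F be the field trace of the extension K/F, and let χ be a nontrivial multiplicative character of K with complex values. Define the Eisenstein sum E(χ) = Σ_{s ∈ K, Tr(s) = 1} χ(s). Then |E(χ)| = q^{(n−1)/2} if the restriction of χ to F* is nontrivial, and |E(χ)| = q^{n/2 − 1} if the restriction of χ to F* is trivial. -/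
/-!
Lift a primitive additive character `ψ` of `F` to `K` through the trace and sort the Gauss
sum `G(χ, ψ ∘ Tr)` by trace fibres. Writing `S t` for the sum of `χ` over the fibre `Tr = t`,
scaling by `t` gives `S t = χ t · E(χ)` for `t ≠ 0`, and `∑ₜ S t = ∑ χ = 0`; hence
`G(χ, ψ ∘ Tr) = (G(χ|F, ψ) - ∑ₜ χ|F t) · E(χ)`. The left side has absolute value
`q^(n/2)`, while the factor in brackets has absolute value `√q` if `χ|F` is nontrivial
(the sum vanishes) and equals `-1 - (q - 1) = -q` if `χ|F` is trivial.
-/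

open Finset

namespace MulChar

variable {R S R' H : Type*} [CommMonoid R] [CommMonoid S] [CommMonoidWithZero R']
  [FunLike H R S] [MonoidHomClass H R S]

def comap (χ : MulChar S R') (f : H) [IsLocalHom f] : MulChar R R' where
  toMonoidHom := χ.toMonoidHom.comp f
  map_nonunit' a ha := χ.map_nonunit fun hfa ↦ ha (isUnit_of_map_unit f a hfa)

@[simp]
lemma comap_apply (χ : MulChar S R') (f : H) [IsLocalHom f] (a : R) : χ.comap f a = χ (f a) :=
  rfl

lemma comap_eq_one_iff {G : Type*} [CommGroupWithZero G] [FunLike H G S] [MonoidHomClass H G S]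
    (χ : MulChar S R') (f : H) [IsLocalHom f] :
    χ.comap f = 1 ↔ ∀ a : G, a ≠ 0 → χ (f a) = 1 := by
  rw [eq_one_iff]
  exact ⟨fun h a ha ↦ h (Units.mk0 a ha), fun h a ↦ h a a.ne_zero⟩

end MulChar

lemma norm_gaussSum {R : Type*} [Field R] [Fintype R] {χ : MulChar R ℂ} (hχ : χ ≠ 1)
    {ψ : AddChar R ℂ} (hψ : ψ.IsPrimitive) : ‖gaussSum χ ψ‖ = √(Fintype.card R) := by
  have h := gaussSum_mul_gaussSum_eq_card hχ hψ
  rw [← star_gaussSum_eq, ← starRingEnd_apply, Complex.mul_conj'] at h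
  have hsq : ‖gaussSum χ ψ‖ ^ 2 = Fintype.card R := by exact_mod_cast h
  rw [← hsq, Real.sqrt_sq (norm_nonneg _)]

lemma AddChar.compAddMonoidHom_ne_one {A B M : Type*} [AddMonoid A] [AddMonoid B] [Monoid M]
    {ψ : AddChar B M} (hψ : ψ ≠ 1) {f : A →+ B} (hf : Function.Surjective f) :
    ψ.compAddMonoidHom f ≠ 1 := fun h ↦
  hψ <| compAddMonoidHom_injective_left f hf (h.trans (by ext; simp))

section TraceFibers

variable (F : Type*) {K R' : Type*} [Field F] [Field K] [Fintype K] [Algebra F K]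
  [DecidableEq F] [CommRing R']

noncomputable def traceFiberSum (χ : MulChar K R') (t : F) : R' :=
  ∑ s ∈ univ.filter fun s : K ↦ Algebra.trace F K s = t, χ s

variable {F}

lemma traceFiberSum_eq_mul (χ : MulChar K R') {t : F} (ht : t ≠ 0) :
    traceFiberSum F χ t = χ.comap (algebraMap F K) t * traceFiberSum F χ 1 := by
  have hc : algebraMap F K t ≠ 0 := (map_ne_zero _).mpr ht
  rw [traceFiberSum, traceFiberSum, mul_sum]
  symm
  refine sum_nbij' (algebraMap F K t * ·) ((algebraMap F K t)⁻¹ * ·) ?_ ?_ ?_ ?_ ?_ <;>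
    intro s hs <;> simp_all [← map_inv₀, ← map_mul, ← Algebra.smul_def]

variable [Fintype F]

lemma sum_traceFiberSum (χ : MulChar K R') : ∑ t, traceFiberSum F χ t = ∑ s, χ s :=
  sum_fiberwise univ _ _

lemma gaussSum_compAddMonoidHom_trace (χ : MulChar K R') (ψ : AddChar F R') :
    gaussSum χ (ψ.compAddMonoidHom (Algebra.trace F K).toAddMonoidHom) =
      ∑ t, ψ t * traceFiberSum F χ t := by
  rw [gaussSum, ← sum_fiberwise univ (fun s : K ↦ Algebra.trace F K s)]
  refine sum_congr rfl fun t _ ↦ ?_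
  rw [traceFiberSum, mul_sum]
  refine sum_congr rfl fun s hs ↦ ?_
  rw [mul_comm, AddChar.compAddMonoidHom_apply, LinearMap.toAddMonoidHom_coe,
    (mem_filter.mp hs).2]

lemma gaussSum_compAddMonoidHom_trace_eq [IsDomain R'] {χ : MulChar K R'} (hχ : χ ≠ 1)
    (ψ : AddChar F R') :
    gaussSum χ (ψ.compAddMonoidHom (Algebra.trace F K).toAddMonoidHom) =
      (gaussSum (χ.comap (algebraMap F K)) ψ - ∑ t, χ.comap (algebraMap F K) t) *
        traceFiberSum F χ 1 := by
  calc _ = ∑ t, ψ t * traceFiberSum F χ t := gaussSum_compAddMonoidHom_trace χ ψ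
    _ = ∑ t, (ψ t - 1) * traceFiberSum F χ t := by
      simp only [sub_one_mul, sum_sub_distrib, sum_traceFiberSum,
        MulChar.sum_eq_zero_of_ne_one hχ, sub_zero]
    _ = ∑ t, (χ.comap (algebraMap F K) t * ψ t - χ.comap (algebraMap F K) t) *
          traceFiberSum F χ 1 := by
      refine sum_congr rfl fun t _ ↦ ?_
      rcases eq_or_ne t 0 with rfl | ht
      · simp
      · rw [traceFiberSum_eq_mul χ ht]
        ring
    _ = _ := by rw [← sum_mul, sum_sub_distrib, gaussSum]

end TraceFibers

lemma eq_rpow_of_rpow_mul_eq_sqrt_pow {q a x : ℝ} (hq : 0 < q) (n : ℕ)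
    (h : q ^ a * x = √(q ^ n)) :
    x = q ^ ((n : ℝ) / 2 - a) := by
  rw [Real.rpow_sub hq, eq_div_iff (Real.rpow_pos_of_pos hq a).ne', mul_comm, h,
    Real.sqrt_eq_rpow, ← Real.rpow_natCast, ← Real.rpow_mul hq.le, mul_one_div]

/-- **Absolute value of Eisenstein sums.** Let `F ⊆ K` be finite fields with `|F| = q` and
`[K : F] = n`, let `Tr` be the trace of `K/F`, and let `χ` be a nontrivial complex-valued
multiplicative character of `K`. Put `E(χ) = ∑_{Tr s = 1} χ s`. Then `|E(χ)| = q^((n-1)/2)`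
if the restriction of `χ` to `F*` is nontrivial, and `|E(χ)| = q^(n/2 - 1)` if it is
trivial. -/
theorem stmt_8 {F K : Type*} [Field F] [Field K] [Fintype F] [Fintype K] [DecidableEq F]
    [Algebra F K] (q n : ℕ) (hq : Fintype.card F = q) (hn : Module.finrank F K = n)
    (χ : MulChar K ℂ) (hχ : χ ≠ 1) :
    (¬ (∀ a : F, a ≠ 0 → χ (algebraMap F K a) = 1) →
      ‖∑ s ∈ Finset.univ.filter fun s : K => Algebra.trace F K s = 1, χ s‖
        = (q : ℝ) ^ (((n : ℝ) - 1) / 2)) ∧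
    ((∀ a : F, a ≠ 0 → χ (algebraMap F K a) = 1) →
      ‖∑ s ∈ Finset.univ.filter fun s : K => Algebra.trace F K s = 1, χ s‖
        = (q : ℝ) ^ ((n : ℝ) / 2 - 1)) := by
  change (_ → ‖traceFiberSum F χ 1‖ = _) ∧ (_ → ‖traceFiberSum F χ 1‖ = _)
  rw [← MulChar.comap_eq_one_iff]
  set ψ := AddChar.FiniteField.primitiveChar_to_Complex F
  have hψ : ψ.IsPrimitive := AddChar.FiniteField.primitiveChar_to_Complex_isPrimitive F
  have hψ1 : ψ ≠ 1 := by simpa using hψ one_ne_zero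
  have hq_pos : 0 < q := hq ▸ Fintype.card_pos
  have hq0 : (0 : ℝ) < q := Nat.cast_pos.mpr hq_pos
  have hG := norm_gaussSum hχ (AddChar.IsPrimitive.of_ne_one
    (AddChar.compAddMonoidHom_ne_one hψ1 (f := (Algebra.trace F K).toAddMonoidHom)
      (Algebra.trace_surjective F K)))
  rw [gaussSum_compAddMonoidHom_trace_eq hχ, norm_mul, Module.card_eq_pow_finrank (K := F), hq,
    hn, Nat.cast_pow] at hG
  refine ⟨fun hχF ↦ ?_, fun hχF ↦ ?_⟩
  · rw [MulChar.sum_eq_zero_of_ne_one hχF, sub_zero, norm_gaussSum hχF hψ, hq,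
      Real.sqrt_eq_rpow] at hG
    rw [eq_rpow_of_rpow_mul_eq_sqrt_pow hq0 n hG]
    ring_nf
  · have hqF : (-1 - ((q - 1 : ℕ) : ℂ)) = -(q : ℂ) := by
      rw [Nat.cast_sub hq_pos]
      ring
    rw [hχF, gaussSum_one_left hψ1, MulChar.sum_one_eq_card_units, Fintype.card_units, hq, hqF,
      norm_neg, Complex.norm_natCast] at hG
    exact eq_rpow_of_rpow_mul_eq_sqrt_pow hq0 n (a := 1) (by rwa [Real.rpow_one])
end

section
/- Let X be a finite connected d-regular simple graph on n vertices with diameter 2 and girth 5. Then n = d² + 1 and d ∈ {2, 3, 7, 57}; hence (n, d) is one of (5,2), (10,3), (50,7), (3250,57). -/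
/-!
Girth 5 and diameter 2 say exactly that adjacent vertices have no common neighbour and distinct
non-adjacent ones have exactly one, so `X` is strongly regular with parameters `(n, d, 0, 1)`.
Counting paths of length two gives `n = d² + 1`, and the adjacency matrix satisfies
`A² + A - (d - 1) I = J`. Eigenvectors for eigenvalues `θ ≠ d` are orthogonal to the all-ones
vector, so `θ² + θ = d - 1`, i.e. `2θ + 1 = ±√(4d - 3)`. The traces of `A` and `A²` show that `d`
is a simple eigenvalue and that the remaining `2θ + 1` sum to `d² - 2d`; hence
`(d² - 2d)² = (4d - 3) t²` for an integer `t`. Unless `d = 2`, this makes `4d - 3 = q²` for an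
integer `q`, and then `q ∣ 15`.
-/

open Finset Matrix SimpleGraph

theorem Finset.exists_sum_eq_mul_intCast {ι R : Type*} [CommRing R] [NoZeroDivisors R]
    (s : Finset ι) {x : ι → R} {c : R} (h : ∀ i ∈ s, x i ^ 2 = c ^ 2) :
    ∃ t : ℤ, ∑ i ∈ s, x i = c * t := by
  classical
  induction s using Finset.induction_on with
  | empty => exact ⟨0, by simp⟩
  | insert j s hj ih =>
    obtain ⟨t, ht⟩ := ih fun i hi => h i (mem_insert_of_mem hi)
    rw [sum_insert hj, ht]
    rcases sq_eq_sq_iff_eq_or_eq_neg.mp (h j (mem_insert_self j s)) with hx | hx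
    · exact ⟨t + 1, by rw [hx]; push_cast; ring⟩
    · exact ⟨t - 1, by rw [hx]; push_cast; ring⟩

theorem Finset.exists_sq_sum_eq_mul_intCast_sq {ι R : Type*} [CommRing R] [NoZeroDivisors R]
    (s : Finset ι) {x : ι → R} {a : R} (h : ∀ i ∈ s, x i ^ 2 = a) :
    ∃ t : ℤ, (∑ i ∈ s, x i) ^ 2 = a * t ^ 2 := by
  obtain rfl | ⟨j, hj⟩ := s.eq_empty_or_nonempty
  · exact ⟨0, by simp⟩
  obtain ⟨t, ht⟩ := s.exists_sum_eq_mul_intCast (c := x j) fun i hi =>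
    (h i hi).trans (h j hj).symm
  exact ⟨t, by rw [ht, mul_pow, h j hj]⟩

theorem Matrix.IsHermitian.trace_pow_eq_sum_eigenvalues_pow {𝕜 n : Type*} [RCLike 𝕜] [Fintype n]
    [DecidableEq n] {A : Matrix n n 𝕜} (hA : A.IsHermitian) (m : ℕ) :
    (A ^ m).trace = ∑ i, (hA.eigenvalues i : 𝕜) ^ m := by
  conv_lhs => rw [hA.spectral_theorem, ← map_pow, Unitary.conjStarAlgAut_apply, trace_mul_cycle,
    Unitary.coe_star_mul_self, one_mul, diagonal_pow, trace_diagonal]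
  simp

theorem sum_filter_ne_two_mul_add_one {ι : Type*} [Fintype ι] {d : ℕ} {θ : ι → ℝ}
    (hcard : Fintype.card ι = d ^ 2 + 1) (hsum : ∑ i, θ i = 0)
    (hsq : ∑ i, θ i ^ 2 = Fintype.card ι * d) (hθ : ∀ i, θ i ≠ d → θ i ^ 2 + θ i = d - 1) :
    ∑ i with θ i ≠ d, (2 * θ i + 1) = (d : ℝ) ^ 2 - 2 * d := by
  classical
  set k : ℝ := ((#{i | θ i = d} : ℕ) : ℝ)
  set S : Finset ι := {i | θ i ≠ d}
  have hsplit (f : ℝ → ℝ) : k * f d + ∑ i ∈ S, f (θ i) = ∑ i, f (θ i) := by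
    have hP : ∑ i with θ i = d, f (θ i) = k * f d := by
      rw [sum_congr rfl fun i hi => by rw [(mem_filter.mp hi).2], sum_const, nsmul_eq_mul]
    rw [← hP, sum_filter_add_sum_filter_not]
  have hcardS : (#S : ℝ) = d ^ 2 + 1 - k := by
    have := card_filter_add_card_filter_not (s := univ) (fun i => θ i = d)
    rw [card_univ, hcard] at this
    rw [eq_sub_iff_add_eq', ← Nat.cast_add, this]
    push_cast
    ring
  have hsqS : ∑ i ∈ S, θ i ^ 2 = (d - 1) * #S - ∑ i ∈ S, θ i := by
    rw [eq_sub_iff_add_eq, ← sum_add_distrib, sum_congr rfl fun i hi => hθ i (mem_filter.mp hi).2,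
      sum_const, nsmul_eq_mul, mul_comm]
  have h1 := hsplit id
  have h2 := hsplit (· ^ 2)
  simp only [id, hsum, hsq, hcard, hsqS, hcardS] at h1 h2
  push_cast at h2
  have hk : k = 1 := by
    have : (k - 1) * ((d : ℝ) ^ 2 + 1) = 0 := by linear_combination h2 + h1
    exact sub_eq_zero.mp ((mul_eq_zero.mp this).resolve_right (by positivity))
  rw [sum_add_distrib, ← mul_sum, sum_const, nsmul_eq_mul, mul_one, hcardS, hk]
  linear_combination 2 * h1 - 2 * d * hk

theorem eq_two_or_three_or_seven_or_fiftySeven {d : ℕ} {t : ℤ} (hd : 2 ≤ d)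
    (h : (4 * d - 3 : ℤ) * t ^ 2 = ((d : ℤ) ^ 2 - 2 * d) ^ 2) :
    d = 2 ∨ d = 3 ∨ d = 7 ∨ d = 57 := by
  rcases eq_or_ne t 0 with rfl | ht
  · have h0 : (d : ℤ) ^ 2 - 2 * d = 0 := by simpa using h.symm
    have : (d : ℤ) * (d - 2) = 0 := by linear_combination h0
    rcases mul_eq_zero.mp this with h0 | h0 <;> omega
  obtain ⟨q, hq⟩ : t ∣ (d : ℤ) ^ 2 - 2 * d :=
    (Int.pow_dvd_pow_iff two_ne_zero).mp ⟨4 * d - 3, by linear_combination -h⟩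
  have hq2 : (4 * d - 3 : ℤ) = q ^ 2 :=
    mul_right_cancel₀ (pow_ne_zero 2 ht) (by rw [h, hq]; ring)
  -- eliminate `d`: `16 (d² - 2d) = q⁴ - 2q² - 15` with `d² - 2d = t q`
  have hq15 : q ∣ 15 :=
    ⟨q ^ 3 - 2 * q - 16 * t, by linear_combination -16 * hq + (q ^ 2 + 4 * d - 5) * hq2⟩
  replace hq15 : q.natAbs ∣ 15 := Int.natAbs_dvd_natAbs.mpr hq15
  have hsq : (4 * d - 3 : ℤ) = q.natAbs ^ 2 := by rw [hq2, Int.natCast_natAbs, sq_abs]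
  have hle : q.natAbs ≤ 15 := Nat.le_of_dvd (by norm_num) hq15
  interval_cases q.natAbs <;> omega

namespace SimpleGraph

variable {V : Type*} {G : SimpleGraph V}

theorem commonNeighbors_eq_empty_of_adj (hg : 3 < G.egirth) {u w : V} (huw : G.Adj u w) :
    G.commonNeighbors u w = ∅ := by
  refine Set.eq_empty_of_forall_notMem fun y hy => ?_
  obtain ⟨huy, hwy⟩ := (mem_commonNeighbors _).mp hy
  have hcyc : (Walk.cons huy (Walk.cons hwy.symm (Walk.cons huw.symm Walk.nil))).IsCycle := by
    simp [Walk.isCycle_def, huy.ne, huw.ne, huy.ne', hwy.ne', huw.ne']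
  simpa using hg.trans_le (egirth_le_length hcyc)

theorem commonNeighbors_subsingleton (hg : 4 < G.egirth) {u w : V} (huw : u ≠ w) :
    (G.commonNeighbors u w).Subsingleton := by
  intro x hx y hy
  by_contra hxy
  obtain ⟨hux, hwx⟩ := (mem_commonNeighbors _).mp hx
  obtain ⟨huy, hwy⟩ := (mem_commonNeighbors _).mp hy
  have hcyc : (Walk.cons hux (Walk.cons hwx.symm (Walk.cons hwy (Walk.cons huy.symm
      Walk.nil)))).IsCycle := by
    simp [Walk.isCycle_def, hux.ne, hwy.ne, huy.ne, hux.ne', hwx.ne', huy.ne', huw, huw.symm, hxy]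
  simpa using hg.trans_le (egirth_le_length hcyc)

variable [Fintype V] [DecidableRel G.Adj] {d : ℕ}

theorem isSRGWith_of_ediam_le_two_of_four_lt_egirth (hreg : G.IsRegularOfDegree d)
    (hdiam : G.ediam ≤ 2) (hg : 4 < G.egirth) : G.IsSRGWith (Fintype.card V) d 0 1 where
  card := rfl
  regular := hreg
  of_adj u w huw := by
    simp [commonNeighbors_eq_empty_of_adj (lt_of_lt_of_le (by norm_num) hg.le) huw]
  of_not_adj u w huw hna := by
    obtain ⟨x, hx⟩ : (G.commonNeighbors u w).Nonempty := by
      rw [Set.nonempty_iff_ne_empty]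
      exact fun h => (edist_le_ediam.trans hdiam).not_gt (two_lt_edist_iff.mpr ⟨huw, hna, h⟩)
    exact Fintype.card_eq_one_iff.mpr
      ⟨⟨x, hx⟩, fun y => Subtype.ext (commonNeighbors_subsingleton hg huw y.2 hx)⟩

theorem IsRegularOfDegree.two_le_of_edist_eq_two (hreg : G.IsRegularOfDegree d) {u w : V}
    (h : G.edist u w = 2) : 2 ≤ d := by
  classical
  obtain ⟨huw, -, y, hy⟩ := edist_eq_two_iff.mp h
  obtain ⟨huy, hwy⟩ := (mem_commonNeighbors _).mp hy
  have hsub : ({u, w} : Finset V) ⊆ G.neighborFinset y := by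
    simp [insert_subset_iff, huy.symm, hwy.symm]
  simpa [card_pair huw, hreg y] using card_le_card hsub

theorem IsSRGWith.card_eq_sq_add_one [Nonempty V] {n : ℕ} (h : G.IsSRGWith n d 0 1) :
    n = d ^ 2 + 1 := by
  obtain ⟨v⟩ := ‹Nonempty V›
  have hd : d < n := h.card ▸ h.regular v ▸ G.degree_lt_card_verts v
  obtain ⟨m, rfl⟩ := Nat.exists_eq_add_of_lt hd
  have hparam := h.param_eq G (by omega)
  rw [Nat.sub_zero, show d + m + 1 - d - 1 = m by omega, mul_one] at hparam
  rw [← hparam]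
  rcases d with _ | d
  · rfl
  · simp only [Nat.add_sub_cancel]
    ring

theorem IsRegularOfDegree.sum_eq_zero_of_adjMatrix_mulVec_eq_smul {α : Type*} [Field α]
    (hreg : G.IsRegularOfDegree d) {θ : α} {v : V → α} (hv : G.adjMatrix α *ᵥ v = θ • v)
    (hθ : θ ≠ d) : ∑ x, v x = 0 := by
  have hones : 1 ᵥ* G.adjMatrix α = (d : α) • 1 := by
    ext x
    rw [← transpose_adjMatrix, vecMul_transpose]
    simpa using adjMatrix_mulVec_const_apply_of_regular (a := (1 : α)) hreg (v := x)
  have h := dotProduct_mulVec 1 (G.adjMatrix α) v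
  rw [hv, hones, dotProduct_smul, smul_dotProduct, one_dotProduct, smul_eq_mul, smul_eq_mul] at h
  exact (mul_eq_mul_right_iff.mp h).resolve_left hθ

theorem IsRegularOfDegree.trace_adjMatrix_sq [DecidableEq V] {α : Type*} [Semiring α]
    (hreg : G.IsRegularOfDegree d) : (G.adjMatrix α ^ 2).trace = Fintype.card V * d := by
  simp only [sq, trace, Matrix.diag_apply, adjMatrix_mul_self_apply_self, hreg _, sum_const,
    card_univ, nsmul_eq_mul]

theorem IsSRGWith.eigenvalue_sq {n k ℓ μ : ℕ} (h : G.IsSRGWith n k ℓ μ) {θ : ℝ} {v : V → ℝ}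
    (hv0 : v ≠ 0) (hv : G.adjMatrix ℝ *ᵥ v = θ • v) (hθ : θ ≠ k) :
    θ ^ 2 = k + ℓ * θ - μ * (1 + θ) := by
  classical
  have hsum := h.regular.sum_eq_zero_of_adjMatrix_mulVec_eq_smul hv hθ
  have hJ : (of 1 : Matrix V V ℝ) *ᵥ v = 0 := by ext; simp [mulVec, dotProduct, hsum]
  have hcompl : Gᶜ.adjMatrix ℝ = of 1 - 1 - G.adjMatrix ℝ := by
    rw [← G.compl_adjMatrix_eq_adjMatrix_compl ℝ,
      ← G.one_add_adjMatrix_add_compl_adjMatrix_eq_of_one ℝ]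
    abel
  have key := congrArg (· *ᵥ v) h.matrix_eq
  simp only [sq, ← mulVec_mulVec, hv, mulVec_smul, add_mulVec, smul_mulVec, hcompl, sub_mulVec,
    hJ, one_mulVec, ← Nat.cast_smul_eq_nsmul ℝ] at key
  have h0 : (θ ^ 2 - (k + ℓ * θ - μ * (1 + θ))) • v = 0 := by
    linear_combination (norm := module) key
  exact sub_eq_zero.mp ((smul_eq_zero.mp h0).resolve_right hv0)

theorem IsSRGWith.exists_int_mul_sq_eq [Nonempty V] {n : ℕ} (h : G.IsSRGWith n d 0 1) :
    ∃ t : ℤ, (4 * d - 3 : ℤ) * t ^ 2 = ((d : ℤ) ^ 2 - 2 * d) ^ 2 := by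
  classical
  have hA : (G.adjMatrix ℝ).IsHermitian := G.isHermitian_adjMatrix ℝ
  set θ := hA.eigenvalues
  have hcard : Fintype.card V = d ^ 2 + 1 := h.card.trans h.card_eq_sq_add_one
  have hsum : ∑ i, θ i = 0 := by
    simpa using hA.trace_eq_sum_eigenvalues.symm.trans (trace_adjMatrix ℝ G)
  have hsq : ∑ i, θ i ^ 2 = Fintype.card V * d := by
    simpa using (hA.trace_pow_eq_sum_eigenvalues_pow 2).symm.trans h.regular.trace_adjMatrix_sq
  have hθ (i : V) (hi : θ i ≠ d) : θ i ^ 2 + θ i = d - 1 := by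
    have hv0 : ⇑(hA.eigenvectorBasis i) ≠ 0 := by
      simpa using hA.eigenvectorBasis.orthonormal.ne_zero i
    have := h.eigenvalue_sq hv0 (hA.mulVec_eigenvectorBasis i) hi
    push_cast at this
    linarith
  obtain ⟨t, ht⟩ := Finset.exists_sq_sum_eq_mul_intCast_sq {i | θ i ≠ d}
    (x := fun i => 2 * θ i + 1) (a := 4 * d - 3) fun i hi => by
      linear_combination 4 * hθ i (mem_filter.mp hi).2
  rw [sum_filter_ne_two_mul_add_one hcard hsum hsq hθ] at ht
  exact ⟨t, by exact_mod_cast ht.symm⟩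

end SimpleGraph

theorem stmt_11_general {V : Type*} [Fintype V] (G : SimpleGraph V) [DecidableRel G.Adj]
    (d : ℕ) (hreg : G.IsRegularOfDegree d)
    (hdiam : G.diam = 2) (hgirth : G.egirth = 5) :
    Fintype.card V = d ^ 2 + 1 ∧ (d = 2 ∨ d = 3 ∨ d = 7 ∨ d = 57) := by
  have hediam : G.ediam = 2 := by
    rw [← ENat.natCast_toNat (ediam_ne_top_of_diam_ne_zero (by omega))]
    exact congrArg _ hdiam
  have : Nonempty V := (nontrivial_of_diam_ne_zero (G := G) (by omega)).to_nonempty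
  have hsrg := isSRGWith_of_ediam_le_two_of_four_lt_egirth hreg hediam.le
    (by rw [hgirth]; norm_num)
  obtain ⟨u, w, huw⟩ := exists_edist_eq_ediam_of_ne_top (G := G) (by simp [hediam])
  obtain ⟨t, ht⟩ := hsrg.exists_int_mul_sq_eq
  exact ⟨hsrg.card_eq_sq_add_one,
    eq_two_or_three_or_seven_or_fiftySeven (hreg.two_le_of_edist_eq_two (huw.trans hediam)) ht⟩

/-- **Hoffman–Singleton theorem.** If a finite connected `d`-regular simple graph on `n`
vertices has diameter `2` and girth `5`, then `n = d² + 1` and `d ∈ {2, 3, 7, 57}`. -/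
theorem stmt_11 {V : Type*} [Fintype V] (G : SimpleGraph V) [DecidableRel G.Adj]
    (d : ℕ) (hconn : G.Connected) (hreg : G.IsRegularOfDegree d)
    (hdiam : G.diam = 2) (hgirth : G.egirth = 5) :
    Fintype.card V = d ^ 2 + 1 ∧ (d = 2 ∨ d = 3 ∨ d = 7 ∨ d = 57) :=
  stmt_11_general G d hreg hdiam hgirth
end

section
/- Let X be a finite connected simple graph with chromatic number χ and largest adjacency eigenvalue α_max. Then χ ≤ 1 + α_max (as real numbers). -/
/-!
Evaluating the Rayleigh bound `x ⬝ᵥ A x ≤ α_max * (x ⬝ᵥ x)` at the indicator vector of a vertex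
set `s` gives `∑_{v ∈ s} deg_s v ≤ α_max * #s`: every induced subgraph has average degree, hence a
vertex of degree, at most `α_max`. Greedy colouring, which colours such a vertex last, then needs
at most `⌊α_max⌋ + 1` colours.
-/

open Matrix Finset

theorem Matrix.IsHermitian.dotProduct_mulVec_le_of_spectrum_le {n : Type*} [Fintype n]
    [DecidableEq n] {A : Matrix n n ℝ} (hA : A.IsHermitian) {α : ℝ} (hα : ∀ μ ∈ spectrum ℝ A, μ ≤ α)
    (x : n → ℝ) : x ⬝ᵥ (A *ᵥ x) ≤ α * (x ⬝ᵥ x) := by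
  have hpsd : (algebraMap ℝ (Matrix n n ℝ) α - A).PosSemidef := by
    refine posSemidef_iff_isHermitian_and_spectrum_nonneg.mpr ⟨?_, ?_⟩
    · exact (isHermitian_diagonal _).sub hA
    · rw [← spectrum.singleton_sub_eq]
      rintro _ ⟨_, rfl, μ, hμ, rfl⟩
      simpa using hα μ hμ
  simpa [sub_mulVec, dotProduct_sub, Algebra.algebraMap_eq_smul_one, smul_mulVec,
    dotProduct_smul] using hpsd.dotProduct_mulVec_nonneg x

namespace SimpleGraph
variable {V : Type*} [Fintype V] [DecidableEq V] (G : SimpleGraph V) [DecidableRel G.Adj]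

theorem sum_card_adj_le_mul_card {α : ℝ}
    (h : ∀ x : V → ℝ, x ⬝ᵥ (G.adjMatrix ℝ *ᵥ x) ≤ α * (x ⬝ᵥ x)) (s : Finset V) :
    ∑ v ∈ s, (#{w ∈ s | G.Adj v w} : ℝ) ≤ α * #s := by
  set x : V → ℝ := fun v => if v ∈ s then 1 else 0
  have hxx : x ⬝ᵥ x = #s := by simp [x, dotProduct]
  have hxAx : x ⬝ᵥ (G.adjMatrix ℝ *ᵥ x) = ∑ v ∈ s, (#{w ∈ s | G.Adj v w} : ℝ) := by
    simp [x, dotProduct, adjMatrix_mulVec_apply, sum_ite_mem, neighborFinset_eq_filter,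
      filter_inter]
  simpa [hxx, hxAx] using h x

theorem colorable_of_forall_exists_card_adj_lt {m : ℕ}
    (h : ∀ s : Finset V, s.Nonempty → ∃ v ∈ s, #{w ∈ s | G.Adj v w} < m) : G.Colorable m := by
  -- `ℕ`-valued colourings bounded on `s`, so that the empty set is colourable even for `m = 0`
  suffices ∀ s : Finset V, ∃ C : V → ℕ,
      (∀ v ∈ s, C v < m) ∧ ∀ u ∈ s, ∀ w ∈ s, G.Adj u w → C u ≠ C w by
    obtain ⟨C, hlt, hC⟩ := this univ
    exact (colorable_iff_exists_bdd_nat_coloring m).mpr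
      ⟨Coloring.mk C fun hadj => hC _ (mem_univ _) _ (mem_univ _) hadj,
        fun v => hlt v (mem_univ v)⟩
  intro s
  induction s using Finset.strongInduction with
  | H s ih =>
    rcases s.eq_empty_or_nonempty with rfl | hs
    · exact ⟨0, by simp, by simp⟩
    obtain ⟨v, hv, hdeg⟩ := h s hs
    obtain ⟨C, hlt, hC⟩ := ih _ (erase_ssubset hv)
    obtain ⟨c, hc, hcfree⟩ : ∃ c ∈ range m, c ∉ image C {w ∈ s | G.Adj v w} :=
      exists_mem_notMem_of_card_lt_card (card_image_le.trans_lt (by simpa using hdeg))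
    refine ⟨Function.update C v c, fun u hu => ?_, fun u hu w hw hadj => ?_⟩
    · rcases eq_or_ne u v with rfl | huv
      · simpa using hc
      · simpa [huv] using hlt u (mem_erase.mpr ⟨huv, hu⟩)
    · have hfree : ∀ w ∈ s, G.Adj v w → C w ≠ c := fun w hw hvw hwc =>
        hcfree (mem_image.mpr ⟨w, mem_filter.mpr ⟨hw, hvw⟩, hwc⟩)
      rcases eq_or_ne u v with rfl | huv
      · simpa [hadj.ne'] using (hfree w hw hadj).symm
      rcases eq_or_ne w v with rfl | hwv
      · simpa [huv] using hfree u hu hadj.symm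
      simpa [huv, hwv] using hC u (mem_erase.mpr ⟨huv, hu⟩) w (mem_erase.mpr ⟨hwv, hw⟩) hadj
theorem chromaticNumber_toNat_le_one_add [Nonempty V] {α : ℝ}
    (h : ∀ x : V → ℝ, x ⬝ᵥ (G.adjMatrix ℝ *ᵥ x) ≤ α * (x ⬝ᵥ x)) :
    (G.chromaticNumber.toNat : ℝ) ≤ 1 + α := by
  have hdeg : ∀ s : Finset V, s.Nonempty → ∃ v ∈ s, (#{w ∈ s | G.Adj v w} : ℝ) ≤ α :=
    fun s hs => exists_le_of_sum_le hs (by simpa [mul_comm] using G.sum_card_adj_le_mul_card h s)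
  have hα : 0 ≤ α := by
    obtain ⟨v, -, hv⟩ := hdeg univ univ_nonempty
    exact (Nat.cast_nonneg _).trans hv
  have hcol : G.Colorable (⌊α⌋₊ + 1) := G.colorable_of_forall_exists_card_adj_lt fun s hs => by
    obtain ⟨v, hv, hvα⟩ := hdeg s hs
    exact ⟨v, hv, Nat.lt_add_one_of_le (Nat.le_floor hvα)⟩
  have hχ : G.chromaticNumber.toNat ≤ ⌊α⌋₊ + 1 :=
    ENat.toNat_le_of_le_natCast hcol.chromaticNumber_le
  calc (G.chromaticNumber.toNat : ℝ) ≤ ⌊α⌋₊ + 1 := by exact_mod_cast hχ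
    _ ≤ 1 + α := by linarith [Nat.floor_le hα]

end SimpleGraph

theorem stmt_15_general {V : Type*} [Fintype V] [DecidableEq V] (G : SimpleGraph V)
    [DecidableRel G.Adj]
    (αmax : ℝ)
    (hmax : IsGreatest {μ : ℝ | Module.End.HasEigenvalue (Matrix.toLin' (G.adjMatrix ℝ)) μ}
      αmax) :
    (G.chromaticNumber.toNat : ℝ) ≤ 1 + αmax := by
  obtain ⟨x, hx⟩ := hmax.1.exists_hasEigenvector
  have : Nonempty V := ⟨(Function.ne_iff.mp hx.2).choose⟩
  have hA : (G.adjMatrix ℝ).IsHermitian := G.isSymm_adjMatrix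
  refine G.chromaticNumber_toNat_le_one_add
    (hA.dotProduct_mulVec_le_of_spectrum_le fun μ hμ => hmax.2 ?_)
  exact Module.End.hasEigenvalue_iff_mem_spectrum.mpr (by rwa [spectrum_toLin'])

/-- **Wilf's bound.** For a finite connected simple graph, the chromatic number satisfies
`χ ≤ 1 + α_max`, where `α_max` is the largest adjacency eigenvalue. -/
theorem stmt_15 {V : Type*} [Fintype V] [DecidableEq V] (G : SimpleGraph V)
    [DecidableRel G.Adj] (hconn : G.Connected)
    (αmax : ℝ)
    (hmax : IsGreatest {μ : ℝ | Module.End.HasEigenvalue (Matrix.toLin' (G.adjMatrix ℝ)) μ}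
      αmax) :
    (G.chromaticNumber.toNat : ℝ) ≤ 1 + αmax :=
  stmt_15_general G αmax hmax
end

section
/- Let X be a finite connected simple graph with at least 2 vertices, with chromatic number χ, largest adjacency eigenvalue α_max, and smallest adjacency eigenvalue α_min (which is negative). Then χ ≥ 1 + α_max/(−α_min). -/
/-!
Colour the graph with `k = χ` colours, let `x` be an eigenvector for `α_max`, let `x_j` be the
restriction of `x` to the `j`-th colour class, and put `z_j = x_j - x / k`. Colour classes are
independent, so `x_jᵀ A x_j = 0`, and expanding gives `∑ z_jᵀ A z_j = -(α_max / k) ‖x‖²` and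
`∑ ‖z_j‖² = (1 - 1 / k) ‖x‖²`. The Rayleigh bound `zᵀ A z ≥ α_min ‖z‖²` summed over `j` yields
`α_max ≤ (k - 1)(-α_min)`. Negativity of `α_min` comes from an edge `uv`:
`(e_u - e_v)ᵀ A (e_u - e_v) = -2 = -‖e_u - e_v‖²`.
-/

open Matrix

namespace Matrix

variable {n : Type*} [Fintype n] [DecidableEq n]

theorem IsHermitian.mul_dotProduct_self_le_dotProduct_mulVec {A : Matrix n n ℝ}
    (hA : A.IsHermitian) {c : ℝ} (hc : ∀ μ, Module.End.HasEigenvalue (toLin' A) μ → c ≤ μ)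
    (z : n → ℝ) : c * (z ⬝ᵥ z) ≤ z ⬝ᵥ (A *ᵥ z) := by
  have hpsd : (A - algebraMap ℝ _ c).PosSemidef := by
    refine posSemidef_iff_isHermitian_and_spectrum_nonneg.2
      ⟨hA.sub (IsSelfAdjoint.algebraMap _ (.all c)), ?_⟩
    rintro _ hμ
    obtain ⟨ν, hν, _, rfl, rfl⟩ := (spectrum.sub_singleton_eq A c).symm ▸ hμ
    rw [← spectrum_toLin', ← Module.End.hasEigenvalue_iff_mem_spectrum] at hν
    simpa using hc ν hν
  have := hpsd.dotProduct_mulVec_nonneg z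
  rw [star_trivial, sub_mulVec, dotProduct_sub, Algebra.algebraMap_eq_smul_one, smul_mulVec,
    one_mulVec, dotProduct_smul, smul_eq_mul] at this
  linarith

end Matrix

theorem sum_dotProduct_mulVec_sub_mean {V ι : Type*} [Fintype V] [Fintype ι] [Nonempty ι]
    (B : Matrix V V ℝ) (y : ι → V → ℝ) :
    let m := (Fintype.card ι : ℝ)⁻¹ • ∑ i, y i
    ∑ j, (y j - m) ⬝ᵥ (B *ᵥ (y j - m)) =
      ∑ j, y j ⬝ᵥ (B *ᵥ y j) - (Fintype.card ι : ℝ)⁻¹ * ((∑ i, y i) ⬝ᵥ (B *ᵥ ∑ i, y i)) := by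
  intro m
  have hk : (Fintype.card ι : ℝ) ≠ 0 := by positivity
  have expand : ∀ j, (y j - m) ⬝ᵥ (B *ᵥ (y j - m)) =
      y j ⬝ᵥ (B *ᵥ y j) - (y j ⬝ᵥ (B *ᵥ m) + m ⬝ᵥ (B *ᵥ y j)) + m ⬝ᵥ (B *ᵥ m) := by
    intro j
    simp only [mulVec_sub, dotProduct_sub, sub_dotProduct]
    ring
  rw [Finset.sum_congr rfl fun j _ => expand j, Finset.sum_add_distrib, Finset.sum_sub_distrib,
    Finset.sum_add_distrib, ← sum_dotProduct, ← dotProduct_sum, ← mulVec_sum, Finset.sum_const,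
    Finset.card_univ, nsmul_eq_mul]
  simp only [m, mulVec_smul, dotProduct_smul, smul_dotProduct, smul_eq_mul]
  field_simp
  ring

section Fibers

variable {V ι : Type*} [DecidableEq ι]

def fiberRestrict (C : V → ι) (x : V → ℝ) (j : ι) : V → ℝ :=
  fun p => if C p = j then x p else 0

theorem sum_fiberRestrict [Fintype ι] (C : V → ι) (x : V → ℝ) :
    ∑ j, fiberRestrict C x j = x := by
  ext p
  simp [fiberRestrict, Finset.sum_apply]

variable [Fintype V]

theorem sum_fiberRestrict_dotProduct_self [Fintype ι] (C : V → ι) (x : V → ℝ) :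
    ∑ j, fiberRestrict C x j ⬝ᵥ fiberRestrict C x j = x ⬝ᵥ x := by
  simp only [dotProduct, fiberRestrict, ite_mul_ite, mul_zero]
  rw [Finset.sum_comm]
  simp

theorem fiberRestrict_dotProduct_mulVec_eq_zero {A : Matrix V V ℝ} {C : V → ι}
    (hC : ∀ p q, C p = C q → A p q = 0) (x : V → ℝ) (j : ι) :
    fiberRestrict C x j ⬝ᵥ (A *ᵥ fiberRestrict C x j) = 0 := by
  refine Finset.sum_eq_zero fun p _ => ?_
  by_cases hp : C p = j
  · refine mul_eq_zero_of_right _ (Finset.sum_eq_zero fun q _ => ?_)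
    by_cases hq : C q = j
    · simp [hC p q (hp.trans hq.symm)]
    · simp [fiberRestrict, hq]
  · simp [fiberRestrict, hp]

end Fibers

theorem Matrix.hoffman_bound {V ι : Type*} [Fintype V] [Fintype ι] [DecidableEq ι]
    {A : Matrix V V ℝ} {C : V → ι} (hC : ∀ p q, C p = C q → A p q = 0) {c μ : ℝ}
    (hc : ∀ z, c * (z ⬝ᵥ z) ≤ z ⬝ᵥ (A *ᵥ z)) {x : V → ℝ} (hx0 : x ≠ 0)
    (hx : A *ᵥ x = μ • x) : μ ≤ (Fintype.card ι - 1) * -c := by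
  classical
  obtain ⟨p, -⟩ := Function.ne_iff.1 hx0
  have : Nonempty ι := ⟨C p⟩
  have hk : (0 : ℝ) < Fintype.card ι := by positivity
  have hX : 0 < x ⬝ᵥ x :=
    lt_of_le_of_ne (Finset.sum_nonneg fun i _ => mul_self_nonneg (x i))
      (Ne.symm (dotProduct_self_eq_zero.not.2 hx0))
  have hsum := Finset.sum_le_sum fun j (_ : j ∈ Finset.univ) =>
    hc (fiberRestrict C x j - (Fintype.card ι : ℝ)⁻¹ • ∑ i, fiberRestrict C x i)
  have hnorm := sum_dotProduct_mulVec_sub_mean 1 (fiberRestrict C x)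
  have hquad := sum_dotProduct_mulVec_sub_mean A (fiberRestrict C x)
  simp only [one_mulVec] at hnorm hquad
  rw [← Finset.mul_sum, hnorm, hquad, sum_fiberRestrict_dotProduct_self,
    Finset.sum_eq_zero fun j _ => fiberRestrict_dotProduct_mulVec_eq_zero hC x j,
    sum_fiberRestrict, hx, dotProduct_smul, smul_eq_mul] at hsum
  have key : (μ + (Fintype.card ι - 1) * c) * (x ⬝ᵥ x) ≤ 0 * (x ⬝ᵥ x) := by
    field_simp at hsum
    linarith
  linarith [le_of_mul_le_mul_right key hX]

namespace SimpleGraph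

variable {V : Type*} (G : SimpleGraph V)

theorem adjMatrix_apply_eq_zero_of_coloring {α R : Type*} [Zero R] [One R] [DecidableRel G.Adj]
    (C : G.Coloring α) {p q : V} (h : C p = C q) : G.adjMatrix R p q = 0 := by
  rw [adjMatrix_apply, if_neg fun hadj => C.valid hadj h]

theorem le_neg_one_of_adj [Fintype V] [DecidableEq V] [DecidableRel G.Adj] {c : ℝ}
    (hc : ∀ z, c * (z ⬝ᵥ z) ≤ z ⬝ᵥ (G.adjMatrix ℝ *ᵥ z)) {u v : V} (huv : G.Adj u v) :
    c ≤ -1 := by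
  have hne := G.ne_of_adj huv
  let z : V → ℝ := Pi.single u 1 - Pi.single v 1
  have hzz : z ⬝ᵥ z = 2 := by
    norm_num [z, dotProduct_sub, sub_dotProduct, hne, hne.symm]
  have hzAz : z ⬝ᵥ (G.adjMatrix ℝ *ᵥ z) = -2 := by
    norm_num [z, mulVec_sub, dotProduct_sub, sub_dotProduct, mulVec_single, huv, huv.symm, hne,
      hne.symm]
  have h := hc z
  rw [hzz, hzAz] at h
  linarith

end SimpleGraph

/-- **Hoffman's bound.** For a finite connected simple graph with at least two vertices, with
largest adjacency eigenvalue `α_max` and smallest adjacency eigenvalue `α_min` (which is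
negative), the chromatic number satisfies `χ ≥ 1 + α_max / (-α_min)`. -/
theorem stmt_16 {V : Type*} [Fintype V] [DecidableEq V] (G : SimpleGraph V)
    [DecidableRel G.Adj] (hconn : G.Connected) (hn : 2 ≤ Fintype.card V)
    (αmax αmin : ℝ)
    (hmax : IsGreatest {μ : ℝ | Module.End.HasEigenvalue (Matrix.toLin' (G.adjMatrix ℝ)) μ}
      αmax)
    (hmin : IsLeast {μ : ℝ | Module.End.HasEigenvalue (Matrix.toLin' (G.adjMatrix ℝ)) μ}
      αmin) :
    αmin < 0 ∧ 1 + αmax / (-αmin) ≤ (G.chromaticNumber.toNat : ℝ) := by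
  have hquad := (G.isHermitian_adjMatrix (R := ℝ)).mul_dotProduct_self_le_dotProduct_mulVec
    fun μ hμ => hmin.2 hμ
  have : Nontrivial V := Fintype.one_lt_card_iff_nontrivial.1 hn
  obtain ⟨v⟩ := ‹Nontrivial V›.to_nonempty
  obtain ⟨w, hvw⟩ := hconn.preconnected.exists_adj_of_nontrivial v
  have hαmin : αmin ≤ -1 := G.le_neg_one_of_adj hquad hvw
  obtain ⟨x, hx⟩ := hmax.1.exists_hasEigenvector
  have hAx : G.adjMatrix ℝ *ᵥ x = αmax • x := by rw [← toLin'_apply]; exact hx.apply_eq_smul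
  have hbound := hoffman_bound
    (fun _ _ => G.adjMatrix_apply_eq_zero_of_coloring G.colorable_chromaticNumber_of_fintype.some)
    hquad hx.2 hAx
  rw [Fintype.card_fin] at hbound
  refine ⟨by linarith, ?_⟩
  linarith [(div_le_iff₀ (by linarith : 0 < -αmin)).2 hbound]
end

section
/- Let X be a finite connected simple graph on n ≥ 2 vertices and let λ₂ be the second-smallest eigenvalue (with multiplicity) of its Laplacian matrix. Then for every vertex subset S with 0 < |S| ≤ n/2 one has |∂S| ≥ (λ₂/2)·|S|; consequently the isoperimetric constant satisfies β ≥ λ₂/2. -/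
/-!
Test the Laplacian `L` on `x = |Sᶜ| · 1_S - |S| · 1_{Sᶜ}`. Since `∑ x = 0`, `x` is orthogonal to
the eigenvector of the eigenvalue `λ₁ = 0`, which is constant because the graph is connected;
expanding `x` in an orthonormal eigenbasis then gives `λ₂ xᵀx ≤ xᵀLx`. Here `xᵀx = |S| |Sᶜ| n`
and `xᵀLx = n² |∂S|`, so `λ₂ |S| |Sᶜ| ≤ n |∂S|`, and `|Sᶜ| ≥ n / 2` gives the claim.
-/

open Finset Matrix

theorem Finset.sum_ite_mem_univ {ι M : Type*} [Fintype ι] [DecidableEq ι] [AddCommMonoid M]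
    (s : Finset ι) (a b : M) : ∑ i, (if i ∈ s then a else b) = #s • a + #sᶜ • b := by
  simp [sum_ite, filter_not, ← compl_eq_univ_sdiff]

namespace Matrix.IsHermitian

variable {n : Type*} [Fintype n] [DecidableEq n] {A : Matrix n n ℝ} (hA : A.IsHermitian)

theorem eigenvectorBasis_dotProduct_mulVec (j : n) (x : n → ℝ) :
    ⇑(hA.eigenvectorBasis j) ⬝ᵥ (A *ᵥ x) =
      hA.eigenvalues j * (⇑(hA.eigenvectorBasis j) ⬝ᵥ x) := by
  rw [dotProduct_mulVec, ← mulVec_transpose, ← conjTranspose_eq_transpose_of_trivial, hA.eq,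
    hA.mulVec_eigenvectorBasis, smul_dotProduct, smul_eq_mul]

theorem sum_eigenvectorBasis_dotProduct_mul (x y : n → ℝ) :
    ∑ j, (⇑(hA.eigenvectorBasis j) ⬝ᵥ x) * (⇑(hA.eigenvectorBasis j) ⬝ᵥ y) = x ⬝ᵥ y := by
  have := (hA.eigenvectorBasis).sum_inner_mul_inner (WithLp.toLp 2 x) (WithLp.toLp 2 y)
  simpa [EuclideanSpace.inner_eq_star_dotProduct, dotProduct_comm] using this

theorem mul_dotProduct_self_le_dotProduct_mulVec_s17 {i₀ : n} {μ : ℝ}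
    (hμ : ∀ j ≠ i₀, μ ≤ hA.eigenvalues j) {x : n → ℝ}
    (hx : ⇑(hA.eigenvectorBasis i₀) ⬝ᵥ x = 0) :
    μ * (x ⬝ᵥ x) ≤ x ⬝ᵥ (A *ᵥ x) := by
  rw [← hA.sum_eigenvectorBasis_dotProduct_mul, ← hA.sum_eigenvectorBasis_dotProduct_mul, mul_sum]
  refine sum_le_sum fun j _ => ?_
  rw [eigenvectorBasis_dotProduct_mulVec]
  rcases eq_or_ne j i₀ with rfl | hj
  · simp [hx]
  · nlinarith [hμ j hj, sq_nonneg (⇑(hA.eigenvectorBasis j) ⬝ᵥ x)]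

end Matrix.IsHermitian

namespace SimpleGraph

variable {V : Type*} [Fintype V] [DecidableEq V] (G : SimpleGraph V) [DecidableRel G.Adj]

theorem dotProduct_lapMatrix_mulVec_ite (S : Finset V) (a b : ℝ) :
    (fun v => if v ∈ S then a else b) ⬝ᵥ (G.lapMatrix ℝ *ᵥ fun v => if v ∈ S then a else b) =
      (a - b) ^ 2 * #(G.interedges S Sᶜ) := by
  have hterm : ∀ i j, (if G.Adj i j then
      ((if i ∈ S then a else b) - (if j ∈ S then a else b)) ^ 2 else 0) =
      (a - b) ^ 2 * ((if (i, j) ∈ G.interedges S Sᶜ then 1 else 0) +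
        (if (i, j) ∈ G.interedges Sᶜ S then 1 else 0)) := by
    intro i j
    simp only [mk_mem_interedges_iff, mem_compl]
    split_ifs <;> simp_all [sub_sq_comm b a]
  have : Std.Symm G.Adj := G.symm
  rw [← toLinearMap₂'_apply', lapMatrix_toLinearMap₂']
  simp_rw [hterm, ← mul_sum, ← Fintype.sum_prod_type', sum_add_distrib, sum_boole]
  rw [filter_mem_eq_inter, univ_inter, filter_mem_eq_inter, univ_inter,
    interedges, interedges, Rel.card_interedges_comm Sᶜ S]
  ring

theorem eigenvectorBasis_lapMatrix_apply_eq (hconn : G.Connected)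
    (hL : (G.lapMatrix ℝ).IsHermitian) {j : V} (hj : hL.eigenvalues j = 0) (u w : V) :
    hL.eigenvectorBasis j u = hL.eigenvectorBasis j w := by
  refine G.lapMatrix_mulVec_eq_zero_iff_forall_reachable.mp ?_ u w (hconn u w)
  rw [hL.mulVec_eigenvectorBasis, hj, zero_smul]

theorem exists_eigenvalues_lapMatrix_eq_zero [Nonempty V] (hL : (G.lapMatrix ℝ).IsHermitian) :
    ∃ j, hL.eigenvalues j = 0 := by
  have := hL.det_eq_prod_eigenvalues
  rw [det_lapMatrix_eq_zero] at this
  simpa [eq_comm (a := (0 : ℝ)), prod_eq_zero_iff] using this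

theorem mul_card_mul_card_compl_le (hconn : G.Connected) (hL : (G.lapMatrix ℝ).IsHermitian)
    {i₀ : V} (h₀ : hL.eigenvalues i₀ = 0) {μ : ℝ} (hμ : ∀ j ≠ i₀, μ ≤ hL.eigenvalues j)
    (S : Finset V) :
    μ * (#S * #Sᶜ) ≤ Fintype.card V * #(G.interedges S Sᶜ) := by
  have hcard : (#S : ℝ) + #Sᶜ = Fintype.card V := by exact_mod_cast card_add_card_compl S
  set x : V → ℝ := fun v => if v ∈ S then (#Sᶜ : ℝ) else -#S
  have hsum : ∑ v, x v = 0 := by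
    simp only [x, sum_ite_mem_univ, nsmul_eq_mul]
    ring
  have horth : ⇑(hL.eigenvectorBasis i₀) ⬝ᵥ x = 0 := by
    obtain ⟨v₀⟩ := hconn.nonempty
    have hconst : ⇑(hL.eigenvectorBasis i₀) = fun _ => hL.eigenvectorBasis i₀ v₀ :=
      funext fun v => G.eigenvectorBasis_lapMatrix_apply_eq hconn hL h₀ v v₀
    rw [hconst, dotProduct, ← mul_sum, hsum, mul_zero]
  have hnorm : x ⬝ᵥ x = #S * #Sᶜ * Fintype.card V := by
    simp only [x, dotProduct, ← sq, apply_ite (· ^ 2), sum_ite_mem_univ, nsmul_eq_mul, ← hcard]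
    ring
  have hquad : x ⬝ᵥ (G.lapMatrix ℝ *ᵥ x) = Fintype.card V ^ 2 * #(G.interedges S Sᶜ) := by
    rw [G.dotProduct_lapMatrix_mulVec_ite, sub_neg_eq_add, add_comm, hcard]
  have hrayleigh := Matrix.IsHermitian.mul_dotProduct_self_le_dotProduct_mulVec_s17 hL hμ horth
  rw [hnorm, hquad] at hrayleigh
  have hV : (0 : ℝ) < Fintype.card V := by
    have := hconn.nonempty
    exact_mod_cast Fintype.card_pos
  exact le_of_mul_le_mul_right (by linear_combination hrayleigh) hV

theorem div_two_mul_card_le (hconn : G.Connected) (hL : (G.lapMatrix ℝ).IsHermitian)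
    {i₀ : V} (h₀ : hL.eigenvalues i₀ = 0) {μ : ℝ} (hμ : ∀ j ≠ i₀, μ ≤ hL.eigenvalues j)
    (hμ₀ : 0 ≤ μ) {S : Finset V} (hS : 2 * #S ≤ Fintype.card V) :
    μ / 2 * #S ≤ #(G.interedges S Sᶜ) := by
  have hbound := G.mul_card_mul_card_compl_le hconn hL h₀ hμ S
  have hcompl : (Fintype.card V : ℝ) ≤ 2 * #Sᶜ := by
    have := card_add_card_compl S
    exact_mod_cast (by omega : Fintype.card V ≤ 2 * #Sᶜ)
  have hV : (0 : ℝ) < Fintype.card V := by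
    have := hconn.nonempty
    exact_mod_cast Fintype.card_pos
  refine le_of_mul_le_mul_right ?_ hV
  nlinarith [mul_nonneg hμ₀ (Nat.cast_nonneg (α := ℝ) #S)]

end SimpleGraph

/-- **Alon–Milman bound.** For a finite connected simple graph on `n ≥ 2` vertices with
Laplacian eigenvalues `0 = λ₁ ≤ λ₂ ≤ …` (listed with multiplicity), every vertex subset `S`
with `0 < |S| ≤ n/2` satisfies `|∂S| ≥ (λ₂/2)|S|`; hence the isoperimetric constant
satisfies `β ≥ λ₂/2`. -/
theorem stmt_17 {V : Type*} [Fintype V] [DecidableEq V] (G : SimpleGraph V)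
    [DecidableRel G.Adj] (hconn : G.Connected) (hn : 2 ≤ Fintype.card V)
    (hL : (G.lapMatrix ℝ).IsHermitian)
    (lam : Fin (Fintype.card V) → ℝ) (hmono : Monotone lam)
    (e : Fin (Fintype.card V) ≃ V) (hlam : ∀ i, lam i = hL.eigenvalues (e i))
    (β : ℝ)
    (hβ : IsLeast {r : ℝ | ∃ S : Finset V, S.Nonempty ∧ 2 * S.card ≤ Fintype.card V ∧
        r = ((((S ×ˢ Sᶜ).filter fun p => G.Adj p.1 p.2).card : ℝ) / S.card)} β) :
    (∀ S : Finset V, S.Nonempty → 2 * S.card ≤ Fintype.card V →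
      lam ⟨1, hn⟩ / 2 * S.card ≤ (((S ×ˢ Sᶜ).filter fun p => G.Adj p.1 p.2).card : ℝ)) ∧
    lam ⟨1, hn⟩ / 2 ≤ β := by
  have : Nonempty V := hconn.nonempty
  let i₀ : Fin (Fintype.card V) := ⟨0, by omega⟩
  have hlam₀ : lam i₀ = 0 := by
    obtain ⟨j, hj⟩ := G.exists_eigenvalues_lapMatrix_eq_zero hL
    refine le_antisymm ?_ ((hlam i₀).symm ▸ (G.posSemidef_lapMatrix ℝ).eigenvalues_nonneg _)
    calc lam i₀ ≤ lam (e.symm j) := hmono (Fin.zero_le _)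
      _ = 0 := by rw [hlam, e.apply_symm_apply, hj]
  have hgap : ∀ j ≠ e i₀, lam ⟨1, hn⟩ ≤ hL.eigenvalues j := fun j hj => by
    have hj' : e.symm j ≠ i₀ := fun h => hj (e.symm_apply_eq.mp h)
    calc lam ⟨1, hn⟩ ≤ lam (e.symm j) :=
          hmono (Fin.mk_le_of_le_val (Nat.one_le_iff_ne_zero.mpr fun h => hj' (Fin.ext h)))
      _ = hL.eigenvalues j := by rw [hlam, e.apply_symm_apply]
  -- `G.interedges S Sᶜ` is by definition the edge boundary `{p ∈ S ×ˢ Sᶜ | G.Adj p.1 p.2}`.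
  have hbound : ∀ S : Finset V, 2 * #S ≤ Fintype.card V →
      lam ⟨1, hn⟩ / 2 * #S ≤ #(G.interedges S Sᶜ) := fun S hS =>
    G.div_two_mul_card_le hconn hL (by rw [← hlam, hlam₀]) hgap
      (hlam₀ ▸ hmono (Fin.zero_le _)) hS
  refine ⟨fun S _ hS => hbound S hS, ?_⟩
  obtain ⟨S, hS, hS2, rfl⟩ := hβ.1
  rw [le_div_iff₀ (by exact_mod_cast hS.card_pos)]
  exact hbound S hS2
end

section
/- Let X be a finite connected simple graph on n ≥ 2 vertices with maximal vertex degree d, let λ₂ be the second-smallest eigenvalue (with multiplicity) of its Laplacian matrix, and let β be its isoperimetric constant. Then β ≤ √(2·d·λ₂). -/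
/-!
Let `f` be a unit eigenvector for `λ₂`. It is orthogonal to the constants, so `∑ f = 0`, and its
energy `∑_{u ∼ v} (f u - f v)²` is `2 λ₂`. Cut `f - t` at a median `t` into its positive and negative
parts: each is supported on at most half of the vertices, their energies add up to at most that of
`f`, and their squared norms add up to at least `∑ f²`.

For `g ≥ 0` supported on such a set, the layer-cake decomposition of `g²` into indicators of its
level sets gives `2 β ∑ g² ≤ ∑_{u ∼ v} |g u² - g v²|`, and Cauchy–Schwarz bounds the right side by
`(∑_{u ∼ v} (g u - g v)²)^{1/2} (4 d ∑ g²)^{1/2}`. Hence `β² ∑ g² ≤ d ∑_{u ∼ v} (g u - g v)²`.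
-/

open Finset Matrix

section PosPart

variable {R : Type*} [CommRing R] [LinearOrder R] [IsStrictOrderedRing R]

theorem sq_eq_sq_posPart_add_sq_negPart (a : R) : a ^ 2 = a⁺ ^ 2 + a⁻ ^ 2 := by
  rcases le_total 0 a with ha | ha <;> simp [ha]

theorem sq_posPart_sub_add_sq_negPart_sub_le (a b : R) :
    (a⁺ - b⁺) ^ 2 + (a⁻ - b⁻) ^ 2 ≤ (a - b) ^ 2 := by
  rcases le_total 0 a with ha | ha <;> rcases le_total 0 b with hb | hb <;>
    simp [ha, hb] <;> nlinarith

end PosPart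

theorem exists_median {V : Type*} [Fintype V] [Nonempty V] (f : V → ℝ) :
    ∃ t, 2 * #{v | t < f v} ≤ Fintype.card V ∧ 2 * #{v | f v < t} ≤ Fintype.card V := by
  set s := {x ∈ univ.image f | Fintype.card V ≤ 2 * #{v | f v ≤ x}}
  have hs : s.Nonempty := by
    obtain ⟨w, -, hw⟩ := univ.exists_max_image f univ_nonempty
    refine ⟨f w, mem_filter.2 ⟨mem_image_of_mem f (mem_univ w), ?_⟩⟩
    rw [filter_true_of_mem fun v _ => hw v (mem_univ v), card_univ]
    omega
  have ht := mem_filter.1 (s.min'_mem hs)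
  refine ⟨s.min' hs, ?_, ?_⟩
  · have := card_filter_add_card_filter_not (s := univ) (fun v => f v ≤ s.min' hs)
    simp only [not_le, card_univ] at this
    omega
  · by_contra hlt
    have hne : ({v | f v < s.min' hs} : Finset V).Nonempty := by
      rw [nonempty_iff_ne_empty]; rintro h; rw [h] at hlt; simp at hlt
    obtain ⟨w, hw, hmax⟩ := exists_max_image _ f hne
    have hwt := (mem_filter.1 hw).2
    have hsub : ({v | f v < s.min' hs} : Finset V) ⊆ ({v | f v ≤ f w} : Finset V) :=
      fun v hv => mem_filter.2 ⟨mem_univ v, hmax v hv⟩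
    have hws : f w ∈ s := mem_filter.2 ⟨mem_image_of_mem f (mem_univ w),
      by have := card_le_card hsub; omega⟩
    exact (s.min'_le _ hws).not_gt hwt

namespace SimpleGraph

variable {V : Type*} [Fintype V] (G : SimpleGraph V) [DecidableRel G.Adj]

/-- Each edge is counted twice, once in each direction. -/
def adjSum (F : V → V → ℝ) : ℝ := ∑ p : V × V with G.Adj p.1 p.2, F p.1 p.2

def edgeBoundary [DecidableEq V] (S : Finset V) : Finset (V × V) := {p ∈ S ×ˢ Sᶜ | G.Adj p.1 p.2}

variable {G}

theorem adjSum_eq_sum_sum (F : V → V → ℝ) :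
    G.adjSum F = ∑ u, ∑ v, if G.Adj u v then F u v else 0 := by
  rw [adjSum, sum_filter, ← univ_product_univ, sum_product]

theorem adjSum_add (F H : V → V → ℝ) :
    G.adjSum (fun u v => F u v + H u v) = G.adjSum F + G.adjSum H :=
  sum_add_distrib

theorem mul_adjSum (c : ℝ) (F : V → V → ℝ) :
    c * G.adjSum F = G.adjSum (fun u v => c * F u v) :=
  mul_sum _ _ _

theorem adjSum_le_adjSum {F H : V → V → ℝ} (h : ∀ u v, F u v ≤ H u v) :
    G.adjSum F ≤ G.adjSum H :=
  sum_le_sum fun _ _ => h _ _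

theorem adjSum_nonneg {F : V → V → ℝ} (h : ∀ u v, 0 ≤ F u v) : 0 ≤ G.adjSum F :=
  sum_nonneg fun _ _ => h _ _

theorem adjSum_swap (F : V → V → ℝ) : G.adjSum (fun u v => F v u) = G.adjSum F := by
  simp_rw [adjSum_eq_sum_sum]
  rw [sum_comm]
  simp_rw [G.adj_comm]

theorem adjSum_eq_sum_degree_mul (a : V → ℝ) :
    G.adjSum (fun u _ => a u) = ∑ u, G.degree u * a u := by
  simp_rw [adjSum_eq_sum_sum, ← sum_filter, sum_const, ← neighborFinset_eq_filter,
    card_neighborFinset_eq_degree, nsmul_eq_mul]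

theorem sq_adjSum_mul_le (F H : V → V → ℝ) :
    G.adjSum (fun u v => F u v * H u v) ^ 2 ≤
      G.adjSum (fun u v => F u v ^ 2) * G.adjSum (fun u v => H u v ^ 2) :=
  sum_mul_sq_le_sq_mul_sq _ _ _

theorem adjSum_indicator_abs_sub [DecidableEq V] (S : Finset V) :
    G.adjSum (fun u v => |(if u ∈ S then 1 else 0) - (if v ∈ S then 1 else 0)|) =
      2 * #(G.edgeBoundary S) := by
  have hsplit : ∀ u v : V, |(if u ∈ S then (1 : ℝ) else 0) - (if v ∈ S then 1 else 0)| =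
      (if u ∈ S ∧ v ∉ S then 1 else 0) + (if v ∈ S ∧ u ∉ S then 1 else 0) := by
    intro u v
    by_cases hu : u ∈ S <;> by_cases hv : v ∈ S <;> simp [hu, hv]
  have hcard : G.adjSum (fun u v => if u ∈ S ∧ v ∉ S then 1 else 0) = #(G.edgeBoundary S) := by
    rw [adjSum, sum_boole, filter_filter, edgeBoundary]
    congr 2
    ext p
    simp [and_comm]
  simp_rw [hsplit, adjSum_add, adjSum_swap (fun u v => if u ∈ S ∧ v ∉ S then (1 : ℝ) else 0),
    hcard, two_mul]

/-- Layer-cake argument: peel off the lowest level `m • 1_S` of `h`, where `S` is its support. -/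
theorem two_mul_sum_le_adjSum_abs_sub [DecidableEq V] {β : ℝ} (A : Finset V)
    (hA : ∀ S ⊆ A, S.Nonempty → β * #S ≤ #(G.edgeBoundary S))
    (h : V → ℝ) (h0 : 0 ≤ h) (hsupp : Function.support h ⊆ A) :
    2 * β * ∑ v, h v ≤ G.adjSum fun u v => |h u - h v| := by
  induction A using Finset.strongInduction generalizing h with
  | H A ih =>
  set S := {v ∈ A | 0 < h v}
  have hout : ∀ v ∉ S, h v = 0 := by
    intro v hv
    by_contra hne
    exact hv (mem_filter.2 ⟨hsupp hne, (h0 v).lt_of_ne' hne⟩)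
  rcases S.eq_empty_or_nonempty with hS | hS
  · have hzero : ∀ v, h v = 0 := fun v => hout v (by simp [hS])
    simpa [hzero] using adjSum_nonneg (G := G) fun _ _ => le_refl 0
  obtain ⟨v₀, hv₀, hmin⟩ := S.exists_min_image h hS
  set m := h v₀
  set h' : V → ℝ := fun v => h v - if v ∈ S then m else 0
  have h'0 : 0 ≤ h' := by
    intro v
    by_cases hv : v ∈ S
    · simpa [h', hv] using hmin v hv
    · simpa [h', hv] using h0 v
  have h'supp : Function.support h' ⊆ S.erase v₀ := by
    intro v hv
    by_cases hvS : v ∈ S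
    · refine mem_erase.2 ⟨fun hvv => hv ?_, hvS⟩
      simp [h', hvv, hv₀, m]
    · exact absurd (by simp [h', hvS, hout v hvS]) hv
  have hSA : S ⊆ A := filter_subset _ _
  have hssub : S.erase v₀ ⊂ A := (erase_ssubset hv₀).trans_subset hSA
  have ih' := ih _ hssub (fun T hT => hA T (hT.trans (erase_subset _ _ |>.trans hSA))) h' h'0 h'supp
  have hsum : ∑ v, h v = ∑ v, h' v + m * #S := by
    simp [h', sum_sub_distrib, sum_ite_mem, mul_comm]
  have hm : 0 < m := (mem_filter.1 hv₀).2
  have hpair : ∀ u v, |h u - h v| =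
      |h' u - h' v| + m * |(if u ∈ S then 1 else 0) - (if v ∈ S then 1 else 0)| := by
    intro u v
    by_cases hu : u ∈ S <;> by_cases hv : v ∈ S
    · simp [h', hu, hv]
    · have := hmin u hu
      simp only [h', hu, hv, hout v hv, if_true, if_false, sub_zero, abs_one, mul_one]
      rw [abs_of_nonneg (by linarith), abs_of_nonneg (by linarith)]
      ring
    · have := hmin v hv
      simp only [h', hu, hv, hout u hu, if_true, if_false]
      rw [abs_of_nonpos (by linarith), abs_of_nonpos (by linarith), abs_of_nonpos (by norm_num)]
      ring
    · simp [h', hu, hv]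
  have hbd := hA S hSA hS
  rw [show (G.adjSum fun u v => |h u - h v|) = _ from congrArg G.adjSum (funext₂ hpair),
    adjSum_add, ← mul_adjSum, adjSum_indicator_abs_sub, hsum]
  nlinarith

theorem adjSum_sq_add_le (g : V → ℝ) :
    G.adjSum (fun u v => (g u + g v) ^ 2) ≤ 4 * G.maxDegree * ∑ v, g v ^ 2 := by
  calc G.adjSum (fun u v => (g u + g v) ^ 2)
      ≤ G.adjSum (fun u v => 2 * g u ^ 2 + 2 * g v ^ 2) :=
        adjSum_le_adjSum fun u v => by nlinarith [sq_nonneg (g u - g v)]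
    _ = 4 * ∑ u, G.degree u * g u ^ 2 := by
        rw [adjSum_add, adjSum_swap (fun u _ => 2 * g u ^ 2), adjSum_eq_sum_degree_mul, mul_sum,
          ← sum_add_distrib]
        exact sum_congr rfl fun _ _ => by ring
    _ ≤ 4 * (G.maxDegree * ∑ v, g v ^ 2) := by
        rw [mul_sum _ _ (G.maxDegree : ℝ)]
        gcongr with u
        exact_mod_cast G.degree_le_maxDegree u
    _ = 4 * G.maxDegree * ∑ v, g v ^ 2 := (mul_assoc _ _ _).symm

theorem sq_mul_sum_sq_le_maxDegree_mul_adjSum [DecidableEq V] {β : ℝ} (hβ : 0 ≤ β)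
    (A : Finset V) (hA : ∀ S ⊆ A, S.Nonempty → β * #S ≤ #(G.edgeBoundary S))
    (g : V → ℝ) (hg : 0 ≤ g) (hsupp : Function.support g ⊆ A) :
    β ^ 2 * ∑ v, g v ^ 2 ≤ G.maxDegree * G.adjSum (fun u v => (g u - g v) ^ 2) := by
  set T := ∑ v, g v ^ 2
  set R := G.adjSum (fun u v => (g u - g v) ^ 2)
  have hcoarea : 2 * β * T ≤ G.adjSum (fun u v => |g u - g v| * (g u + g v)) := by
    have hsupp2 : Function.support (fun v => g v ^ 2) ⊆ A :=
      fun v hv => hsupp fun h0 => hv (by simp [h0])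
    convert two_mul_sum_le_adjSum_abs_sub A hA _ (fun v => sq_nonneg (g v)) hsupp2 using 4
    rw [sq_sub_sq, abs_mul, abs_of_nonneg (add_nonneg (hg _) (hg _)), mul_comm]
  have hCS := sq_adjSum_mul_le (G := G) (fun u v => |g u - g v|) (fun u v => g u + g v)
  simp only [sq_abs] at hCS
  have hQ := adjSum_sq_add_le (G := G) g
  have hT : 0 ≤ T := sum_nonneg fun v _ => sq_nonneg (g v)
  have hR : 0 ≤ R := adjSum_nonneg fun u v => sq_nonneg _
  have hd : (0 : ℝ) ≤ G.maxDegree := Nat.cast_nonneg _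
  have hsq : (2 * β * T) ^ 2 ≤ R * (4 * G.maxDegree * T) :=
    (pow_le_pow_left₀ (by positivity) hcoarea 2).trans (hCS.trans (by gcongr))
  rcases hT.eq_or_lt with hT0 | hTpos
  · rw [← hT0, mul_zero]; positivity
  · nlinarith

theorem sq_mul_sum_sq_le_of_sum_eq_zero [DecidableEq V] [Nonempty V] {β : ℝ} (hβ0 : 0 ≤ β)
    (hβ : ∀ S : Finset V, S.Nonempty → 2 * #S ≤ Fintype.card V → β * #S ≤ #(G.edgeBoundary S))
    (f : V → ℝ) (hf : ∑ v, f v = 0) :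
    β ^ 2 * ∑ v, f v ^ 2 ≤ G.maxDegree * G.adjSum (fun u v => (f u - f v) ^ 2) := by
  obtain ⟨t, hup, hdown⟩ := exists_median f
  have hsmall : ∀ A : Finset V, 2 * #A ≤ Fintype.card V →
      ∀ S ⊆ A, S.Nonempty → β * #S ≤ #(G.edgeBoundary S) :=
    fun A hA S hS hne => hβ S hne (by have := card_le_card hS; omega)
  have hp := sq_mul_sum_sq_le_maxDegree_mul_adjSum hβ0 _ (hsmall _ hup) (fun v => (f v - t)⁺)
    (fun v => posPart_nonneg _) fun v hv => by
      simpa [sub_pos] using (posPart_nonneg (f v - t)).lt_of_ne' hv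
  have hq := sq_mul_sum_sq_le_maxDegree_mul_adjSum hβ0 _ (hsmall _ hdown) (fun v => (f v - t)⁻)
    (fun v => negPart_nonneg _) fun v hv => by
      simpa [sub_neg] using (negPart_nonneg (f v - t)).lt_of_ne' hv
  have hsplit : G.adjSum (fun u v => ((f u - t)⁺ - (f v - t)⁺) ^ 2) +
      G.adjSum (fun u v => ((f u - t)⁻ - (f v - t)⁻) ^ 2) ≤
        G.adjSum (fun u v => (f u - f v) ^ 2) := by
    rw [← adjSum_add]
    refine adjSum_le_adjSum fun u v => ?_
    simpa using sq_posPart_sub_add_sq_negPart_sub_le (f u - t) (f v - t)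
  -- `∑ (f - t) ^ 2 = ∑ f ^ 2 + n t ^ 2` because `f` has mean zero
  have hshift : ∑ v, f v ^ 2 ≤ ∑ v, ((f v - t)⁺) ^ 2 + ∑ v, ((f v - t)⁻) ^ 2 := by
    rw [← sum_add_distrib]
    simp_rw [← sq_eq_sq_posPart_add_sq_negPart, sub_sq, sum_add_distrib, sum_sub_distrib,
      ← sum_mul, ← mul_sum, hf]
    simp only [mul_zero, zero_mul, sub_zero, le_add_iff_nonneg_right]
    positivity
  calc β ^ 2 * ∑ v, f v ^ 2
      ≤ β ^ 2 * (∑ v, ((f v - t)⁺) ^ 2 + ∑ v, ((f v - t)⁻) ^ 2) := by gcongr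
    _ ≤ G.maxDegree * G.adjSum (fun u v => (f u - f v) ^ 2) := by nlinarith

theorem adjSum_sq_sub_eq_of_mulVec_eq_smul [DecidableEq V] {f : V → ℝ} {μ : ℝ}
    (hf : G.lapMatrix ℝ *ᵥ f = μ • f) :
    G.adjSum (fun u v => (f u - f v) ^ 2) = 2 * μ * ∑ v, f v ^ 2 := by
  have h := G.lapMatrix_toLinearMap₂' ℝ f
  rw [toLinearMap₂'_apply', hf, dotProduct_smul, ← adjSum_eq_sum_sum] at h
  simp only [dotProduct, smul_eq_mul, ← sq] at h
  linarith

theorem sum_eq_zero_of_mulVec_eq_smul [DecidableEq V] {f : V → ℝ} {μ : ℝ} (hμ : μ ≠ 0)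
    (hf : G.lapMatrix ℝ *ᵥ f = μ • f) : ∑ v, f v = 0 := by
  have h : 1 ⬝ᵥ (G.lapMatrix ℝ *ᵥ f) = 0 := by
    rw [dotProduct_mulVec, ← mulVec_transpose, (G.isSymm_lapMatrix (R := ℝ)).eq]
    exact (congrArg (· ⬝ᵥ f) G.lapMatrix_mulVec_const_eq_zero).trans (zero_dotProduct f)
  rw [hf, dotProduct_smul, one_dotProduct, smul_eq_mul] at h
  exact (mul_eq_zero.1 h).resolve_left hμ

/-- Kernel vectors of the Laplacian of a connected graph are constant, and two orthonormal
constant vectors cannot exist. -/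
theorem Connected.eq_of_eigenvalues_eq_zero [DecidableEq V] (hconn : G.Connected)
    (hL : (G.lapMatrix ℝ).IsHermitian) {i j : V} (hi : hL.eigenvalues i = 0)
    (hj : hL.eigenvalues j = 0) : i = j := by
  obtain ⟨v₀⟩ := hconn.nonempty
  set b := hL.eigenvectorBasis
  have hconst : ∀ k, hL.eigenvalues k = 0 → ∀ u, b k u = b k v₀ := by
    intro k hk u
    have hker := hL.mulVec_eigenvectorBasis k
    rw [hk, zero_smul, lapMatrix_mulVec_eq_zero_iff_forall_reachable] at hker
    exact hker u v₀ (hconn.preconnected u v₀)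
  have hinner : ∀ k l, hL.eigenvalues k = 0 → hL.eigenvalues l = 0 →
      Fintype.card V * (b k v₀ * b l v₀) = if k = l then 1 else 0 := by
    intro k l hk hl
    rw [← orthonormal_iff_ite.1 b.orthonormal k l, PiLp.inner_apply]
    simp [hconst k hk, hconst l hl, mul_comm]
  by_contra hij
  have hii := hinner i i hi hi
  have hjj := hinner j j hj hj
  have hij' := hinner i j hi hj
  simp only [if_true, hij, if_false] at hii hjj hij'
  nlinarith

theorem Connected.lapMatrix_eigenvalue_one_pos [DecidableEq V] (hconn : G.Connected)
    (hL : (G.lapMatrix ℝ).IsHermitian) (lam : Fin (Fintype.card V) → ℝ) (hmono : Monotone lam)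
    (e : Fin (Fintype.card V) ≃ V) (hlam : ∀ i, lam i = hL.eigenvalues (e i))
    (hn : 2 ≤ Fintype.card V) : 0 < lam ⟨1, hn⟩ := by
  have hnonneg : ∀ i, 0 ≤ lam i := fun i => by
    rw [hlam]; exact (G.posSemidef_lapMatrix ℝ).eigenvalues_nonneg _
  refine (hnonneg _).lt_of_ne fun h1 => ?_
  have h0 : lam ⟨0, by omega⟩ = 0 :=
    le_antisymm (h1 ▸ hmono (Fin.mk_le_mk.2 zero_le_one)) (hnonneg _)
  have he := hconn.eq_of_eigenvalues_eq_zero hL ((hlam _).symm.trans h0)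
    ((hlam _).symm.trans h1.symm)
  simpa using e.injective he

variable [DecidableEq V]

def isoperimetricQuotients : Set ℝ :=
  {r | ∃ S : Finset V, S.Nonempty ∧ 2 * #S ≤ Fintype.card V ∧ r = #(G.edgeBoundary S) / #S}

theorem nonneg_of_isLeast_isoperimetricQuotients {β : ℝ}
    (hβ : IsLeast G.isoperimetricQuotients β) : 0 ≤ β := by
  obtain ⟨S, -, -, rfl⟩ := hβ.1
  positivity

theorem mul_card_le_of_isLeast_isoperimetricQuotients {β : ℝ}
    (hβ : IsLeast G.isoperimetricQuotients β) (S : Finset V) (hS : S.Nonempty)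
    (hcard : 2 * #S ≤ Fintype.card V) : β * #S ≤ #(G.edgeBoundary S) :=
  (le_div_iff₀ (by exact_mod_cast hS.card_pos)).1 (hβ.2 ⟨S, hS, hcard, rfl⟩)

end SimpleGraph

/-- **Dodziuk's bound (discrete Cheeger inequality).** For a finite connected simple graph on
`n ≥ 2` vertices with maximal degree `d` and Laplacian eigenvalues `0 = λ₁ ≤ λ₂ ≤ …`
(listed with multiplicity), the isoperimetric constant satisfies `β ≤ √(2 d λ₂)`. -/
theorem stmt_18 {V : Type*} [Fintype V] [DecidableEq V] (G : SimpleGraph V)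
    [DecidableRel G.Adj] (hconn : G.Connected) (hn : 2 ≤ Fintype.card V)
    (hL : (G.lapMatrix ℝ).IsHermitian)
    (lam : Fin (Fintype.card V) → ℝ) (hmono : Monotone lam)
    (e : Fin (Fintype.card V) ≃ V) (hlam : ∀ i, lam i = hL.eigenvalues (e i))
    (β : ℝ)
    (hβ : IsLeast {r : ℝ | ∃ S : Finset V, S.Nonempty ∧ 2 * S.card ≤ Fintype.card V ∧
        r = ((((S ×ˢ Sᶜ).filter fun p => G.Adj p.1 p.2).card : ℝ) / S.card)} β) :
    β ≤ Real.sqrt (2 * (G.maxDegree : ℝ) * lam ⟨1, hn⟩) := by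
  have : Nonempty V := hconn.nonempty
  set f : V → ℝ := ⇑(hL.eigenvectorBasis (e ⟨1, hn⟩))
  have hf : G.lapMatrix ℝ *ᵥ f = lam ⟨1, hn⟩ • f := by
    rw [hlam]; exact hL.mulVec_eigenvectorBasis _
  have hμ := hconn.lapMatrix_eigenvalue_one_pos hL lam hmono e hlam hn
  have hnorm : ∑ v, f v ^ 2 = 1 := by
    rw [← EuclideanSpace.real_norm_sq_eq, hL.eigenvectorBasis.norm_eq_one, one_pow]
  have hcheeger := G.sq_mul_sum_sq_le_of_sum_eq_zero
    (G.nonneg_of_isLeast_isoperimetricQuotients hβ)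
    (G.mul_card_le_of_isLeast_isoperimetricQuotients hβ) f
    (SimpleGraph.sum_eq_zero_of_mulVec_eq_smul hμ.ne' hf)
  rw [SimpleGraph.adjSum_sq_sub_eq_of_mulVec_eq_smul hf, hnorm] at hcheeger
  exact (le_abs_self β).trans (Real.abs_le_sqrt (by linarith))
end

section
/- Let X be a finite connected non-bipartite d-regular simple graph on n vertices with adjacency eigenvalues d = α_1 > α_2 ≥ … ≥ α_n (listed with multiplicity), and set α = max{α_2, −α_n}. Then for all vertex subsets S and T, |e(S,T) − (d/n)·|S|·|T|| ≤ (α/n)·√(|S|·|T|·(n−|S|)·(n−|T|)), where e(S,T) = #{(u,v) ∈ S × T : u is adjacent to v}. -/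
/-!
Let `x` and `y` be the indicator vectors of `S` and `T` with their means subtracted. By
regularity, `x ⬝ A y = e(S,T) - (d/n)|S||T|` and `‖x‖² = |S|(n-|S|)/n`. Since `x` sums to zero,
it is orthogonal to every eigenvector for the eigenvalue `d`, as such eigenvectors are constant on
a connected graph. Every eigenvalue other than `d` sits at one of the positions `2, …, n` of the
sorted list, hence lies in `[α_n, α_2] ⊆ [-α, α]`. Expanding `x ⬝ A y` in an orthonormal
eigenbasis and applying Cauchy–Schwarz gives `|x ⬝ A y| ≤ α ‖x‖ ‖y‖`.
-/

open Matrix Finset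

namespace Matrix.IsHermitian

variable {n : Type*} [Fintype n] [DecidableEq n] {A : Matrix n n ℝ} (hA : A.IsHermitian)

lemma dotProduct_eq_sum_eigenvectorBasis (x y : n → ℝ) :
    x ⬝ᵥ y = ∑ j, (⇑(hA.eigenvectorBasis j) ⬝ᵥ x) * (⇑(hA.eigenvectorBasis j) ⬝ᵥ y) := by
  simpa [EuclideanSpace.inner_eq_star_dotProduct, dotProduct_comm] using
    (hA.eigenvectorBasis.sum_inner_mul_inner (WithLp.toLp 2 x) (WithLp.toLp 2 y)).symm

lemma dotProduct_mulVec_eq_sum_eigenvalues (x y : n → ℝ) :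
    x ⬝ᵥ A *ᵥ y = ∑ j, hA.eigenvalues j * (⇑(hA.eigenvectorBasis j) ⬝ᵥ x) *
      (⇑(hA.eigenvectorBasis j) ⬝ᵥ y) := by
  rw [hA.dotProduct_eq_sum_eigenvectorBasis]
  refine sum_congr rfl fun j _ => ?_
  rw [dotProduct_mulVec, ← mulVec_transpose, (isHermitian_iff_isSymm.mp hA).eq,
    hA.mulVec_eigenvectorBasis, smul_dotProduct,
    smul_eq_mul]
  ring

lemma abs_dotProduct_mulVec_le {β : ℝ} (hβ : 0 ≤ β) {x : n → ℝ}
    (hx : ∀ j, |hA.eigenvalues j| ≤ β ∨ ⇑(hA.eigenvectorBasis j) ⬝ᵥ x = 0) (y : n → ℝ) :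
    |x ⬝ᵥ A *ᵥ y| ≤ β * √(x ⬝ᵥ x) * √(y ⬝ᵥ y) := by
  set c : n → ℝ := fun j => ⇑(hA.eigenvectorBasis j) ⬝ᵥ x
  set c' : n → ℝ := fun j => ⇑(hA.eigenvectorBasis j) ⬝ᵥ y
  have hterm : ∀ j, |hA.eigenvalues j * c j * c' j| ≤ β * (|c j| * |c' j|) := fun j => by
    rw [abs_mul, abs_mul, mul_assoc]
    rcases hx j with hev | hc
    · exact mul_le_mul_of_nonneg_right hev (by positivity)
    · simp [c, hc]
  calc |x ⬝ᵥ A *ᵥ y| = |∑ j, hA.eigenvalues j * c j * c' j| := by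
        rw [hA.dotProduct_mulVec_eq_sum_eigenvalues]
    _ ≤ ∑ j, β * (|c j| * |c' j|) := (abs_sum_le_sum_abs _ _).trans (sum_le_sum fun j _ => hterm j)
    _ ≤ β * (√(∑ j, |c j| ^ 2) * √(∑ j, |c' j| ^ 2)) := by
        rw [← mul_sum]
        exact mul_le_mul_of_nonneg_left (Real.sum_mul_le_sqrt_mul_sqrt _ _ _) hβ
    _ = β * √(x ⬝ᵥ x) * √(y ⬝ᵥ y) := by
        simp only [sq_abs]
        simp only [sq, c, c', ← hA.dotProduct_eq_sum_eigenvectorBasis, mul_assoc]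

end Matrix.IsHermitian

lemma Antitone.abs_le_max_of_ne_zero {m : ℕ} {α : Fin m → ℝ} (hα : Antitone α) (hm : 2 ≤ m)
    {i : Fin m} (hi : (i : ℕ) ≠ 0) : |α i| ≤ max (α ⟨1, hm⟩) (-α ⟨m - 1, by omega⟩) := by
  have hup : α i ≤ α ⟨1, hm⟩ := hα (Fin.mk_le_of_le_val (by omega))
  have hlo : α ⟨m - 1, by omega⟩ ≤ α i := hα (Fin.le_def.mpr (Nat.le_sub_one_of_lt i.isLt))
  exact abs_le.mpr ⟨by linarith [le_max_right (α ⟨1, hm⟩) (-α ⟨m - 1, by omega⟩)],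
    hup.trans (le_max_left _ _)⟩

namespace Finset

variable {V : Type*} [Fintype V]

lemma card_div_card_univ_mul_card_univ (S : Finset V) :
    (#S / Fintype.card V : ℝ) * Fintype.card V = #S := by
  rcases (Fintype.card V).eq_zero_or_pos with h | h
  · have : IsEmpty V := Fintype.card_eq_zero_iff.mp h
    simp [S.eq_empty_of_isEmpty]
  · exact div_mul_cancel₀ _ (by positivity)

variable [DecidableEq V]

noncomputable def centeredIndicator (S : Finset V) : V → ℝ :=
  (fun v => if v ∈ S then 1 else 0) - (#S / Fintype.card V : ℝ) • 1

lemma sum_centeredIndicator (S : Finset V) : ∑ v, S.centeredIndicator v = 0 := by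
  simp only [centeredIndicator, Pi.sub_apply, Pi.smul_apply, Pi.one_apply, smul_eq_mul, mul_one,
    sum_sub_distrib, sum_ite_mem, univ_inter, sum_const, nsmul_eq_mul, card_univ]
  linarith [S.card_div_card_univ_mul_card_univ]

lemma centeredIndicator_dotProduct_one (S : Finset V) : S.centeredIndicator ⬝ᵥ 1 = 0 := by
  rw [dotProduct_one, sum_centeredIndicator]

lemma centeredIndicator_dotProduct_self (S : Finset V) :
    S.centeredIndicator ⬝ᵥ S.centeredIndicator =
      #S * (Fintype.card V - #S) / Fintype.card V := by
  have hcancel := S.card_div_card_univ_mul_card_univ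
  calc S.centeredIndicator ⬝ᵥ S.centeredIndicator
      = S.centeredIndicator ⬝ᵥ fun v => if v ∈ S then 1 else 0 := by
        conv_lhs => arg 2; rw [centeredIndicator]
        rw [dotProduct_sub, dotProduct_smul, S.centeredIndicator_dotProduct_one, smul_zero,
          sub_zero]
    _ = #S * (1 - #S / Fintype.card V) := by
        simp only [dotProduct, centeredIndicator, Pi.sub_apply, Pi.smul_apply, Pi.one_apply,
          smul_eq_mul, mul_one, mul_ite, mul_zero, sum_ite_mem, univ_inter, sum_sub_distrib,
          inter_self, sum_const, nsmul_eq_mul]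
        ring
    _ = #S * (Fintype.card V - #S) / Fintype.card V := by
        linear_combination -hcancel

end Finset

lemma Real.sqrt_div_mul_sqrt_div {a b c : ℝ} (ha : 0 ≤ a) (hc : 0 ≤ c) :
    √(a / c) * √(b / c) = √(a * b) / c := by
  rw [← Real.sqrt_mul (div_nonneg ha hc), div_mul_div_comm, Real.sqrt_div' _ (by positivity),
    Real.sqrt_mul_self hc]

namespace SimpleGraph

variable {V : Type*} [Fintype V] {G : SimpleGraph V} [DecidableRel G.Adj] {d : ℕ}

lemma IsRegularOfDegree.adjMatrix_mulVec_one (hreg : G.IsRegularOfDegree d) :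
    G.adjMatrix ℝ *ᵥ 1 = (d : ℝ) • 1 := by
  ext v
  simpa using adjMatrix_mulVec_const_apply_of_regular (a := (1 : ℝ)) hreg (v := v)

variable [DecidableEq V]

lemma Connected.apply_eq_of_adjMatrix_mulVec_eq (hconn : G.Connected)
    (hreg : G.IsRegularOfDegree d) {u : V → ℝ} (hu : G.adjMatrix ℝ *ᵥ u = (d : ℝ) • u)
    (i j : V) : u i = u j := by
  have hlap : G.lapMatrix ℝ *ᵥ u = 0 := by
    ext v
    simp [lapMatrix, sub_mulVec, hu, degMatrix_mulVec_apply, hreg v]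
  exact (lapMatrix_mulVec_eq_zero_iff_forall_reachable G).mp hlap i j (hconn.preconnected i j)

lemma Connected.eigenvectorBasis_dotProduct_eq_zero_of_eigenvalues_eq (hconn : G.Connected)
    (hreg : G.IsRegularOfDegree d) (hA : (G.adjMatrix ℝ).IsHermitian) {j : V}
    (hj : hA.eigenvalues j = d) {x : V → ℝ} (hx : ∑ v, x v = 0) :
    ⇑(hA.eigenvectorBasis j) ⬝ᵥ x = 0 := by
  have hconst := hconn.apply_eq_of_adjMatrix_mulVec_eq hreg
    (by rw [hA.mulVec_eigenvectorBasis, hj])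
  obtain ⟨v₀⟩ := hconn.nonempty
  calc ⇑(hA.eigenvectorBasis j) ⬝ᵥ x = ∑ v, hA.eigenvectorBasis j v₀ * x v :=
        sum_congr rfl fun v _ => by rw [hconst v v₀]
    _ = 0 := by rw [← mul_sum, hx, mul_zero]

lemma indicator_dotProduct_adjMatrix_mulVec_indicator (S T : Finset V) :
    (fun v => if v ∈ S then (1 : ℝ) else 0) ⬝ᵥ
        G.adjMatrix ℝ *ᵥ (fun v => if v ∈ T then (1 : ℝ) else 0) =
      #{p ∈ S ×ˢ T | G.Adj p.1 p.2} := by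
  rw [card_filter]
  push_cast
  rw [sum_product]
  simp only [dotProduct, mulVec, adjMatrix_apply, ite_mul, mul_ite, one_mul, mul_one, zero_mul,
    mul_zero, sum_ite_mem, univ_inter]

lemma IsRegularOfDegree.centeredIndicator_dotProduct_adjMatrix_mulVec
    (hreg : G.IsRegularOfDegree d) (S T : Finset V) :
    S.centeredIndicator ⬝ᵥ G.adjMatrix ℝ *ᵥ T.centeredIndicator =
      #{p ∈ S ×ˢ T | G.Adj p.1 p.2} - d / Fintype.card V * #S * #T := by
  set χT : V → ℝ := fun v => if v ∈ T then 1 else 0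
  have hone : (1 : V → ℝ) ⬝ᵥ G.adjMatrix ℝ *ᵥ χT = d * #T := by
    rw [dotProduct_mulVec, ← mulVec_transpose, transpose_adjMatrix, hreg.adjMatrix_mulVec_one,
      smul_dotProduct, one_dotProduct, smul_eq_mul]
    simp [χT]
  calc S.centeredIndicator ⬝ᵥ G.adjMatrix ℝ *ᵥ T.centeredIndicator
      = S.centeredIndicator ⬝ᵥ G.adjMatrix ℝ *ᵥ χT := by
        rw [centeredIndicator.eq_1 T, mulVec_sub, mulVec_smul, hreg.adjMatrix_mulVec_one,
          dotProduct_sub, dotProduct_smul, dotProduct_smul, S.centeredIndicator_dotProduct_one]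
        simp [χT]
    _ = (fun v => if v ∈ S then (1 : ℝ) else 0) ⬝ᵥ G.adjMatrix ℝ *ᵥ χT -
          #S / Fintype.card V * ((1 : V → ℝ) ⬝ᵥ G.adjMatrix ℝ *ᵥ χT) := by
        rw [centeredIndicator, sub_dotProduct, smul_dotProduct, smul_eq_mul]
    _ = _ := by
        rw [indicator_dotProduct_adjMatrix_mulVec_indicator, hone]
        ring

end SimpleGraph

/-- **Expander mixing lemma (non-bipartite case).** Let `X` be a finite connected
non-bipartite `d`-regular simple graph on `n` vertices with adjacency eigenvalues
`d = α₁ > α₂ ≥ … ≥ α_n` listed in decreasing order with multiplicity, and set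
`α = max (α₂, -α_n)`. Then for all vertex subsets `S, T`,
`|e(S,T) - (d/n)|S||T|| ≤ (α/n) √(|S||T|(n-|S|)(n-|T|))`, where
`e(S,T)` is the number of pairs `(u,v) ∈ S × T` with `u` adjacent to `v`. -/
theorem stmt_19 {V : Type*} [Fintype V] [DecidableEq V] (G : SimpleGraph V)
    [DecidableRel G.Adj] (d : ℕ) (hconn : G.Connected)
    (hreg : G.IsRegularOfDegree d) (hn : 2 ≤ Fintype.card V)
    (hA : (G.adjMatrix ℝ).IsHermitian)
    (α : Fin (Fintype.card V) → ℝ) (hanti : Antitone α)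
    (e : Fin (Fintype.card V) ≃ V) (hα : ∀ i, α i = hA.eigenvalues (e i))
    (hα1 : α ⟨0, by omega⟩ = d) :
    ∀ S T : Finset V,
      |((((S ×ˢ T).filter fun p => G.Adj p.1 p.2).card : ℝ) -
          (d : ℝ) / (Fintype.card V : ℝ) * S.card * T.card)| ≤
        max (α ⟨1, hn⟩) (-α ⟨Fintype.card V - 1, by omega⟩) / (Fintype.card V : ℝ) *
          Real.sqrt ((S.card : ℝ) * T.card * ((Fintype.card V : ℝ) - S.card) *
            ((Fintype.card V : ℝ) - T.card)) := by
  intro S T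
  set β := max (α ⟨1, hn⟩) (-α ⟨Fintype.card V - 1, by omega⟩)
  have hβ : 0 ≤ β :=
    (abs_nonneg _).trans (hanti.abs_le_max_of_ne_zero hn (i := ⟨1, hn⟩) one_ne_zero)
  have hspectral : ∀ j, |hA.eigenvalues j| ≤ β ∨
      ⇑(hA.eigenvectorBasis j) ⬝ᵥ S.centeredIndicator = 0 := by
    intro j
    by_cases hj : hA.eigenvalues j = d
    · exact .inr (hconn.eigenvectorBasis_dotProduct_eq_zero_of_eigenvalues_eq hreg hA hj
        S.sum_centeredIndicator)
    · obtain ⟨i, rfl⟩ := e.surjective j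
      rw [← hα] at hj ⊢
      refine .inl (hanti.abs_le_max_of_ne_zero hn fun hi => hj ?_)
      rw [← hα1, show i = ⟨0, by omega⟩ from Fin.ext hi]
  have key := hA.abs_dotProduct_mulVec_le hβ hspectral T.centeredIndicator
  rw [hreg.centeredIndicator_dotProduct_adjMatrix_mulVec, S.centeredIndicator_dotProduct_self,
    T.centeredIndicator_dotProduct_self, mul_assoc β,
    Real.sqrt_div_mul_sqrt_div (mul_nonneg (Nat.cast_nonneg _) (sub_nonneg.mpr
      (mod_cast S.card_le_univ))) (Nat.cast_nonneg _)] at key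
  refine key.trans_eq ?_
  ring_nf
end
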